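/- arXiv:1502.03793 — 10 statements merged into one kernel-verified Lean document; each statement's English description precedes it below -/
import Mathlib

section
/- Fix vectors A^max, S^max ∈ ℝ^N with 0 ≤ S^max_i < A^max_i for every i. Let y ∈ ℝ^N with y ≥ 0, let S be a random vector with 0 ≤ S ≤ S^max almost surely, and let A be independent of S with a probability density f satisfying f ≥ δ_* almost everywhere on the rectangle [0, A^max] (for some δ_* > 0). Then for every Borel set B ⊆ ℝ^N, P((y − S)^+ + A ∈ B) ≥ δ_* · Leb(B ∩ [y, y + A^max − S^max]), where (·)^+ denotes the componentwise positive part and [a, b] denotes the rectangle ∏_i [a_i, b_i]. In particular, the law of (y − S)^+ + A has density at least δ_* a.e. on the rectangle [y, y + A^max − S^max]. -/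
open MeasureTheory
open scoped ENNReal

/-- One-step queue transition `(y − S)^+ + A` has law minorized by
`δ_* · Leb(· ∩ [y, y + A^max − S^max])`, when `A` is independent of `S` with a density
at least `δ_*` on the rectangle `[0, A^max]` and `0 ≤ S ≤ S^max` a.s. -/
theorem queue_transition_density_lower_bound (N : ℕ)
    (Amax Smax : Fin N → ℝ) (hAS : ∀ i, 0 ≤ Smax i ∧ Smax i < Amax i)
    (y : Fin N → ℝ) (hy : ∀ i, 0 ≤ y i)
    (δstar : ℝ) (hδ : 0 < δstar)
    (Ω : Type) (mΩ : MeasurableSpace Ω) (P : Measure Ω) (hP : IsProbabilityMeasure P)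
    (S A : Ω → (Fin N → ℝ)) (hSmeas : Measurable S) (hAmeas : Measurable A)
    (hSbound : ∀ᵐ ω ∂P, ∀ i, 0 ≤ S ω i ∧ S ω i ≤ Smax i)
    (hindep : ProbabilityTheory.IndepFun S A P)
    (f : (Fin N → ℝ) → ℝ≥0∞) (hf : Measurable f)
    (hlawA : Measure.map A P = volume.withDensity f)
    (hflow : ∀ᵐ x ∂(volume : Measure (Fin N → ℝ)),
      (∀ i, 0 ≤ x i ∧ x i ≤ Amax i) → ENNReal.ofReal δstar ≤ f x) :
    ∀ B : Set (Fin N → ℝ), MeasurableSet B →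
      ENNReal.ofReal δstar *
          volume (B ∩ Set.Icc y (fun i => y i + Amax i - Smax i)) ≤
        P {ω | (fun i => max (y i - S ω i) 0 + A ω i) ∈ B} := by
  intro B hB
  classical
  set R : Set (Fin N → ℝ) := Set.Icc y (fun i => y i + Amax i - Smax i) with hR
  set c : (Fin N → ℝ) → (Fin N → ℝ) := fun s i => max (y i - s i) 0 with hc
  have hcmeas : Measurable c :=
    measurable_pi_lambda _ fun i =>
      ((measurable_const.sub (measurable_pi_apply i)).max measurable_const)
  set g : (Fin N → ℝ) × (Fin N → ℝ) → (Fin N → ℝ) := fun p => c p.1 + p.2 with hg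
  have hgmeas : Measurable g := (hcmeas.comp measurable_fst).add measurable_snd
  -- joint law factorization
  have hjoint : P.map (fun ω => (S ω, A ω)) = (P.map S).prod (P.map A) :=
    (ProbabilityTheory.indepFun_iff_map_prod_eq_prod_map_map hSmeas.aemeasurable
      hAmeas.aemeasurable).mp hindep
  have hset : {ω | (fun i => max (y i - S ω i) 0 + A ω i) ∈ B}
      = (fun ω => (S ω, A ω)) ⁻¹' (g ⁻¹' B) := by
    ext ω
    simp only [Set.mem_setOf_eq, Set.mem_preimage, hg, hc]
    constructor <;> intro h <;> convert h using 1 <;> funext i <;> simp [Pi.add_apply]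
  rw [hset, ← Measure.map_apply (hSmeas.prodMk hAmeas) (hgmeas hB), hjoint,
    Measure.prod_apply (hgmeas hB)]
  -- pointwise bound for a.e. s
  have hboxS : MeasurableSet {s : Fin N → ℝ | ∀ i, 0 ≤ s i ∧ s i ≤ Smax i} := by
    have : {s : Fin N → ℝ | ∀ i, 0 ≤ s i ∧ s i ≤ Smax i} =
        ⋂ i, ({s | 0 ≤ s i} ∩ {s | s i ≤ Smax i}) := by
      ext s; simp [Set.mem_iInter, forall_and]
    rw [this]
    exact MeasurableSet.iInter fun i =>
      (measurableSet_le measurable_const (measurable_pi_apply i)).inter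
        (measurableSet_le (measurable_pi_apply i) measurable_const)
  have hae : ∀ᵐ s ∂(P.map S), ∀ i, 0 ≤ s i ∧ s i ≤ Smax i :=
    (ae_map_iff hSmeas.aemeasurable hboxS).mpr hSbound
  have key : ∀ᵐ s ∂(P.map S),
      ENNReal.ofReal δstar * volume (B ∩ R) ≤ (P.map A) (Prod.mk s ⁻¹' (g ⁻¹' B)) := by
    filter_upwards [hae] with s hs
    have hpresec : Prod.mk s ⁻¹' (g ⁻¹' B) = (fun a => c s + a) ⁻¹' B := rfl
    rw [hpresec, hlawA, withDensity_apply f ((measurable_const_add (c s)) hB)]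
    set D : Set (Fin N → ℝ) := (fun a => c s + a) ⁻¹' (B ∩ R) with hD
    have hDmeas : MeasurableSet D := (measurable_const_add (c s)) (hB.inter measurableSet_Icc)
    have hDsub : D ⊆ (fun a => c s + a) ⁻¹' B := Set.preimage_mono Set.inter_subset_left
    have hDbox : ∀ a ∈ D, ∀ i, 0 ≤ a i ∧ a i ≤ Amax i := by
      intro a ha i
      have h1 : y i ≤ c s i + a i := (ha.2.1) i
      have h2 : c s i + a i ≤ y i + Amax i - Smax i := (ha.2.2) i
      have hc1 : c s i ≤ y i := by
        simp only [hc]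
        exact max_le (by linarith [(hs i).1]) (hy i)
      have hc2 : y i - Smax i ≤ c s i := by
        simp only [hc]
        exact le_max_of_le_left (by linarith [(hs i).2])
      constructor <;> nlinarith
    have hvolD : volume D = volume (B ∩ R) := by
      simpa [hD] using measure_preimage_add (volume : Measure (Fin N → ℝ)) (c s) (B ∩ R)
    calc ENNReal.ofReal δstar * volume (B ∩ R)
        = ∫⁻ _ in D, ENNReal.ofReal δstar ∂volume := by
          rw [setLIntegral_const, hvolD]
      _ ≤ ∫⁻ a in D, f a ∂volume := by
          refine lintegral_mono_ae ?_
          filter_upwards [ae_restrict_of_ae hflow, ae_restrict_mem hDmeas] with a hfa haD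
          exact hfa (hDbox a haD)
      _ ≤ ∫⁻ a in (fun a => c s + a) ⁻¹' B, f a ∂volume := lintegral_mono_set hDsub
  calc ENNReal.ofReal δstar * volume (B ∩ R)
      = ∫⁻ _, ENNReal.ofReal δstar * volume (B ∩ R) ∂(P.map S) := by
        have : IsProbabilityMeasure (P.map S) := Measure.isProbabilityMeasure_map hSmeas.aemeasurable
        rw [lintegral_const, measure_univ, mul_one]
    _ ≤ ∫⁻ s, (P.map A) (Prod.mk s ⁻¹' (g ⁻¹' B)) ∂(P.map S) := lintegral_mono_ae key
end

section
/- Fix vectors A^max, S^max ∈ ℝ^N with 0 ≤ S^max_i < A^max_i for every i, and δ_* > 0. Let x ∈ ℝ^N with x ≥ 0, and let 0 < ε < (1/3)·min_i (A^max_i − S^max_i). Set H := [x + ε·1, x + (A^max − S^max) − ε·1] (a nonempty rectangle, where 1 is the all-ones vector). Then for every y ≥ 0 with ‖y − x‖ ≤ ε, every random vector S_y with 0 ≤ S_y ≤ S^max a.s., and every A independent of S_y with probability density f satisfying f ≥ δ_* a.e. on [0, A^max], the law of (y − S_y)^+ + A satisfies: for every Borel B ⊆ ℝ^N, P((y − S_y)^+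 + A ∈ B) ≥ δ_* · Leb(B ∩ H). That is, the one-step transition measures from all points of the ball B_ε(x) ∩ ℝ^N_+ are uniformly minorized by the common nontrivial measure δ_*·Leb|_H. -/
open MeasureTheory
open scoped ENNReal

lemma euclid_abs_coord_le_norm {N : ℕ} (v : EuclideanSpace ℝ (Fin N)) (i : Fin N) :
    |v i| ≤ ‖v‖ := by
  rw [EuclideanSpace.norm_eq]
  refine le_trans ?_ (Real.sqrt_le_sqrt
    (Finset.single_le_sum (fun j _ => sq_nonneg _) (Finset.mem_univ i)))
  rw [Real.sqrt_sq_eq_abs]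
  simp [abs_abs]

/-- Uniform minorization of the one-step queue transition from all points `y`
in the ball `B_ε(x) ∩ ℝ^N_+`: the law of `(y − S_y)^+ + A` dominates `δ_* · Leb(· ∩ H)` with
the common rectangle `H = [x + ε·1, x + (A^max − S^max) − ε·1]`. -/
theorem queue_transition_uniform_minorization (N : ℕ)
    (Amax Smax : Fin N → ℝ) (hAS : ∀ i, 0 ≤ Smax i ∧ Smax i < Amax i)
    (δstar : ℝ) (hδ : 0 < δstar)
    (x : EuclideanSpace ℝ (Fin N)) (hx : ∀ i, 0 ≤ x i)
    (ε : ℝ) (hε : 0 < ε) (hε3 : ∀ i, ε < (Amax i - Smax i) / 3) :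
    ∀ y : EuclideanSpace ℝ (Fin N), (∀ i, 0 ≤ y i) → ‖y - x‖ ≤ ε →
    ∀ (Ω : Type) (mΩ : MeasurableSpace Ω) (P : Measure Ω), IsProbabilityMeasure P →
    ∀ S A : Ω → EuclideanSpace ℝ (Fin N), Measurable S → Measurable A →
      (∀ᵐ ω ∂P, ∀ i, 0 ≤ S ω i ∧ S ω i ≤ Smax i) →
      ProbabilityTheory.IndepFun S A P →
    ∀ f : EuclideanSpace ℝ (Fin N) → ℝ≥0∞, Measurable f →
      Measure.map A P = volume.withDensity f →
      (∀ᵐ z ∂(volume : Measure (EuclideanSpace ℝ (Fin N))),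
        (∀ i, 0 ≤ z i ∧ z i ≤ Amax i) → ENNReal.ofReal δstar ≤ f z) →
    ∀ B : Set (EuclideanSpace ℝ (Fin N)), MeasurableSet B →
      ENNReal.ofReal δstar *
          volume (B ∩ {z : EuclideanSpace ℝ (Fin N) |
            ∀ i, x i + ε ≤ z i ∧ z i ≤ x i + (Amax i - Smax i) - ε}) ≤
        P {ω | (WithLp.toLp 2 (fun i => max (y i - S ω i) 0 + A ω i) : EuclideanSpace ℝ (Fin N)) ∈ B} := by
  intro y hy hyx Ω mΩ P hP S A hS hA hSbd hind f hf hmap hfδ B hB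
  -- coordinate bound for y
  have hyc : ∀ i, |y i - x i| ≤ ε := fun i => by
    have := euclid_abs_coord_le_norm (y - x) i
    simpa using this.trans hyx
  -- the rectangle H
  set H : Set (EuclideanSpace ℝ (Fin N)) :=
    {z | ∀ i, x i + ε ≤ z i ∧ z i ≤ x i + (Amax i - Smax i) - ε} with hH
  have hcoord : ∀ i : Fin N, Measurable (fun v : EuclideanSpace ℝ (Fin N) => v i) :=
    fun i => ((continuous_apply i).comp (PiLp.continuous_ofLp 2 _)).measurable
  have hHm : MeasurableSet H := by
    have : H = ⋂ i, {z : EuclideanSpace ℝ (Fin N) |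
        x i + ε ≤ z i ∧ z i ≤ x i + (Amax i - Smax i) - ε} := by
      ext z; simp [hH, Set.mem_iInter]
    rw [this]
    exact MeasurableSet.iInter fun i =>
      ((measurableSet_le measurable_const (hcoord i)).inter
        (measurableSet_le (hcoord i) measurable_const))
  -- the "queue" map
  set Q : EuclideanSpace ℝ (Fin N) → EuclideanSpace ℝ (Fin N) :=
    fun s => WithLp.toLp 2 (fun i => max (y i - s i) 0) with hQ
  have hQm : Measurable Q := by
    refine (PiLp.continuous_toLp 2 _).measurable.comp (measurable_pi_lambda _ ?_)
    intro i
    exact ((measurable_const.sub (hcoord i)).max measurable_const)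
  -- the event, rewritten
  have hev : {ω | (WithLp.toLp 2 (fun i => max (y i - S ω i) 0 + A ω i) : EuclideanSpace ℝ (Fin N)) ∈ B}
      = (fun ω => (S ω, A ω)) ⁻¹' {p : EuclideanSpace ℝ (Fin N) × EuclideanSpace ℝ (Fin N) |
          Q p.1 + p.2 ∈ B} := by
    ext ω
    simp only [Set.mem_setOf_eq, Set.mem_preimage]
    congr! 1
  have hCm : MeasurableSet {p : EuclideanSpace ℝ (Fin N) × EuclideanSpace ℝ (Fin N) |
      Q p.1 + p.2 ∈ B} := by
    exact ((hQm.comp measurable_fst).add measurable_snd) hB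
  -- independence: law of pair is product
  have hprod : Measure.map (fun ω => (S ω, A ω)) P
      = (Measure.map S P).prod (Measure.map A P) :=
    (ProbabilityTheory.indepFun_iff_map_prod_eq_prod_map_map hS.aemeasurable
      hA.aemeasurable).mp hind
  haveI : IsProbabilityMeasure (Measure.map S P) := Measure.isProbabilityMeasure_map hS.aemeasurable
  haveI : IsProbabilityMeasure (Measure.map A P) := Measure.isProbabilityMeasure_map hA.aemeasurable
  rw [hev, ← Measure.map_apply (hS.prodMk hA) hCm, hprod,
    Measure.prod_apply hCm]
  -- the set of good service vectors
  have hgoodm : MeasurableSet {s : EuclideanSpace ℝ (Fin N) | ∀ i, 0 ≤ s i ∧ s i ≤ Smax i} := by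
    have : {s : EuclideanSpace ℝ (Fin N) | ∀ i, 0 ≤ s i ∧ s i ≤ Smax i}
        = ⋂ i, {s : EuclideanSpace ℝ (Fin N) | 0 ≤ s i ∧ s i ≤ Smax i} := by
      ext s; simp [Set.mem_iInter]
    rw [this]
    exact MeasurableSet.iInter fun i =>
      ((measurableSet_le measurable_const (hcoord i)).inter
        (measurableSet_le (hcoord i) measurable_const))
  have hSbd' : ∀ᵐ s ∂(Measure.map S P), ∀ i, 0 ≤ s i ∧ s i ≤ Smax i := by
    rw [ae_map_iff hS.aemeasurable hgoodm]
    exact hSbd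
  -- pointwise bound for good s
  have key : ∀ s : EuclideanSpace ℝ (Fin N), (∀ i, 0 ≤ s i ∧ s i ≤ Smax i) →
      ENNReal.ofReal δstar * volume (B ∩ H)
        ≤ (Measure.map A P) (Prod.mk s ⁻¹' {p : EuclideanSpace ℝ (Fin N) ×
            EuclideanSpace ℝ (Fin N) | Q p.1 + p.2 ∈ B}) := by
    intro s hs
    have hpre : Prod.mk s ⁻¹' {p : EuclideanSpace ℝ (Fin N) ×
        EuclideanSpace ℝ (Fin N) | Q p.1 + p.2 ∈ B}
        = (fun a => Q s + a) ⁻¹' B := rfl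
    have htr : Measurable (fun a : EuclideanSpace ℝ (Fin N) => Q s + a) :=
      measurable_id.const_add (Q s)
    rw [hpre, hmap, withDensity_apply _ (htr hB)]
    -- restrict to translated B ∩ H
    set T : Set (EuclideanSpace ℝ (Fin N)) := (fun a => Q s + a) ⁻¹' (B ∩ H) with hT
    have hTm : MeasurableSet T := htr (hB.inter hHm)
    have hTsub : T ⊆ (fun a => Q s + a) ⁻¹' B := fun a ha => ha.1
    -- every point of T lies in the box [0, Amax]
    have hTbox : ∀ a ∈ T, ∀ i, 0 ≤ a i ∧ a i ≤ Amax i := by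
      intro a ha i
      have hz := ha.2 i
      have hQi : Q s i = max (y i - s i) 0 := rfl
      have hq0 : 0 ≤ Q s i := by rw [hQi]; exact le_max_right _ _
      have hqy : Q s i ≤ x i + ε := by
        rw [hQi]
        refine max_le ?_ (by linarith [hx i, hε.le])
        have := (abs_le.mp (hyc i)).2
        have := (hs i).1
        simp only [PiLp.sub_apply] at *
        linarith
      have hql : y i - Smax i ≤ Q s i := by
        rw [hQi]
        have := (hs i).2
        exact le_trans (by linarith) (le_max_left _ _)
      have hxy := (abs_le.mp (hyc i)).1
      have h1 : x i + ε ≤ Q s i + a i := hz.1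
      have h2 : Q s i + a i ≤ x i + (Amax i - Smax i) - ε := hz.2
      constructor
      · linarith
      · have hql' : x i - ε - Smax i ≤ Q s i := by
          refine le_trans ?_ hql; linarith
        linarith
    have h1 : ∫⁻ a in T, f a ≤ ∫⁻ a in (fun a => Q s + a) ⁻¹' B, f a :=
      lintegral_mono_set hTsub
    refine le_trans ?_ h1
    have h2 : ∫⁻ a in T, ENNReal.ofReal δstar ≤ ∫⁻ a in T, f a := by
      refine lintegral_mono_ae ?_
      rw [ae_restrict_iff' hTm]
      filter_upwards [hfδ] with a hfa ha using hfa (hTbox a ha)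
    refine le_trans ?_ h2
    rw [lintegral_const, Measure.restrict_apply_univ]
    have hvolT : volume T = volume (B ∩ H) := by
      have : T = (fun a => a + Q s) ⁻¹' (B ∩ H) := by
        ext a; simp [hT, add_comm]
      rw [this, measure_preimage_add_right volume (Q s) (B ∩ H)]
    rw [hvolT]
  -- integrate the bound
  calc ENNReal.ofReal δstar * volume (B ∩ H)
      = ∫⁻ _, ENNReal.ofReal δstar * volume (B ∩ H) ∂(Measure.map S P) := by
        rw [lintegral_const, measure_univ, mul_one]
    _ ≤ ∫⁻ s, (Measure.map A P) (Prod.mk s ⁻¹' {p : EuclideanSpace ℝ (Fin N) ×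
          EuclideanSpace ℝ (Fin N) | Q p.1 + p.2 ∈ B}) ∂(Measure.map S P) := by
        refine lintegral_mono_ae ?_
        filter_upwards [hSbd'] with s hs using key s hs
end

section
/- Let V ⊆ ℝ^N, let ν ∈ ℝ^N with ‖ν‖ = 1, let λ* ∈ V, and let δ > 0 be such that every y ∈ ℝ^N with ν·(y − λ*) = 0 and ‖y − λ*‖ ≤ δ belongs to V. Then for every w ∈ ℝ^N: sup_{v ∈ V} w·v ≥ w·λ* + δ‖w_⊥‖, where w_⊥ := w − (w·ν)ν is the orthogonal projection of w onto the hyperplane orthogonal to ν. -/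
open MeasureTheory
open scoped RealInnerProductSpace

/-- If the δ-ball around `λ*` inside the hyperplane through `λ*` orthogonal
to the unit vector `ν` lies in `V`, then for every `w`, the supremum of `w·v` over `v ∈ V`
is at least `w·λ* + δ‖w_⊥‖`, where `w_⊥ = w − (w·ν)ν`. -/
theorem maxweight_face_inequality (N : ℕ)
    (V : Set (EuclideanSpace ℝ (Fin N)))
    (ν : EuclideanSpace ℝ (Fin N)) (hν : ‖ν‖ = 1)
    (lamstar : EuclideanSpace ℝ (Fin N)) (hlam : lamstar ∈ V)
    (δ : ℝ) (hδ : 0 < δ)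
    (hball : ∀ y : EuclideanSpace ℝ (Fin N),
      ⟪ν, y - lamstar⟫ = 0 → ‖y - lamstar‖ ≤ δ → y ∈ V) :
    ∀ w : EuclideanSpace ℝ (Fin N),
      ∃ v ∈ V, ⟪w, lamstar⟫ + δ * ‖w - ⟪w, ν⟫ • ν‖ ≤ ⟪w, v⟫ := by
  intro w
  set p : EuclideanSpace ℝ (Fin N) := w - ⟪w, ν⟫ • ν with hp
  have hνν : ⟪ν, ν⟫ = 1 := by
    have := real_inner_self_eq_norm_sq ν
    rw [hν] at this; simpa using this
  have hνp : ⟪ν, p⟫ = 0 := by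
    rw [hp, inner_sub_right, inner_smul_right, hνν, real_inner_comm]
    ring
  have hwp : ⟪w, p⟫ = ‖p‖ ^ 2 := by
    have h : ⟪p, p⟫ = ⟪w, p⟫ - ⟪w, ν⟫ * ⟪ν, p⟫ := by
      rw [hp, inner_sub_left, real_inner_smul_left]
    rw [← real_inner_self_eq_norm_sq, h, hνp]; ring
  by_cases hp0 : p = 0
  · exact ⟨lamstar, hlam, by simp [hp0]⟩
  · have hpn : (0:ℝ) < ‖p‖ := norm_pos_iff.mpr hp0
    set y : EuclideanSpace ℝ (Fin N) := lamstar + (δ / ‖p‖) • p with hy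
    have hyd : y - lamstar = (δ / ‖p‖) • p := by rw [hy]; abel
    have h1 : ⟪ν, y - lamstar⟫ = 0 := by rw [hyd, inner_smul_right, hνp]; ring
    have h2 : ‖y - lamstar‖ ≤ δ := by
      rw [hyd, norm_smul]
      rw [Real.norm_eq_abs, abs_of_pos (div_pos hδ hpn)]
      field_simp
      exact le_rfl
    refine ⟨y, hball y h1 h2, ?_⟩
    have : ⟪w, y⟫ = ⟪w, lamstar⟫ + (δ / ‖p‖) * ‖p‖ ^ 2 := by
      rw [hy, inner_add_right, inner_smul_right, hwp]
    rw [this]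
    have : (δ / ‖p‖) * ‖p‖ ^ 2 = δ * ‖p‖ := by field_simp
    rw [this]
end

section
/- Let (X_t)_{t≥0} be a nonnegative real-valued stochastic process adapted to a filtration (F_t), with X_0 = b almost surely for a constant b ≥ 0. Suppose there are positive constants κ, δ, D such that (a) E[X_{t+1} − X_t | F_t] ≤ −δ almost surely on the event {X_t ≥ κ}, and (b) |X_{t+1} − X_t| ≤ D almost surely, for every t. Then there exist constants η > 0 and ρ ∈ (0,1) such that for all t ≥ 0 and all u ≥ 0: P(X_t ≥ u) ≤ ρ^t · exp(η(b − u)) + ((1 − ρ^t)/(1 − ρ)) · D · exp(η(κ − u)). -/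
open MeasureTheory

lemma exp_le_one_add_add_sq {x : ℝ} (hx : |x| ≤ 1) : Real.exp x ≤ 1 + x + x ^ 2 := by
  have h := Real.exp_bound hx (by norm_num : 0 < 2)
  have h2 : ∑ m ∈ Finset.range 2, x ^ m / m.factorial = 1 + x := by
    simp [Finset.sum_range_succ]
  rw [h2] at h
  have h3 := (abs_sub_le_iff.1 h).1
  have hx2 : |x| ^ 2 = x ^ 2 := sq_abs x
  rw [hx2] at h3
  have h4 : ((Nat.succ 2 : ℕ) : ℝ) / ((Nat.factorial 2 : ℕ) * (2 : ℕ)) = 3 / 4 := by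
    norm_num [Nat.factorial]
  rw [h4] at h3
  nlinarith [sq_nonneg x]


set_option maxHeartbeats 1000000 in
/-- Hajek's drift lemma. A nonnegative adapted process starting at `b`, with
conditional drift at most `−δ` on `{X_t ≥ κ}` and increments bounded by `D`, has uniformly
exponentially decaying tails. -/
theorem hajek_drift_tail_bound
    (Ω : Type) (mΩ : MeasurableSpace Ω) (P : Measure Ω) (hP : IsProbabilityMeasure P)
    (F : Filtration ℕ mΩ) (X : ℕ → Ω → ℝ) (hadapted : Adapted F X)
    (hnonneg : ∀ t, ∀ᵐ ω ∂P, 0 ≤ X t ω)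
    (b : ℝ) (hb : 0 ≤ b) (h0 : ∀ᵐ ω ∂P, X 0 ω = b)
    (κ δ D : ℝ) (hκ : 0 < κ) (hδ : 0 < δ) (hD : 0 < D)
    (hdrift : ∀ t, ∀ᵐ ω ∂P, κ ≤ X t ω → (P[X (t + 1) - X t|F t]) ω ≤ -δ)
    (hbdd : ∀ t, ∀ᵐ ω ∂P, |X (t + 1) ω - X t ω| ≤ D) :
    ∃ η > (0 : ℝ), ∃ ρ : ℝ, 0 < ρ ∧ ρ < 1 ∧ ∀ t : ℕ, ∀ u : ℝ, 0 ≤ u →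
      (P {ω | u ≤ X t ω}).toReal ≤
        ρ ^ t * Real.exp (η * (b - u)) +
          (1 - ρ ^ t) / (1 - ρ) * D * Real.exp (η * (κ - u)) := by
  -- choose η and ρ
  set η : ℝ := min (min (1 / D) (δ / (2 * D ^ 2))) (min (1 / δ) (2 * D / (4 * D + δ))) with hη_def
  have hη : 0 < η := by
    refine lt_min (lt_min (by positivity) (by positivity)) (lt_min (by positivity) (by positivity))
  have hηD1 : η * D ≤ 1 := by
    have h1 : η ≤ 1 / D := le_trans (min_le_left _ _) (min_le_left _ _)
    rw [le_div_iff₀ hD] at h1; linarith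
  have hηD2 : η * D ^ 2 ≤ δ / 2 := by
    have h1 : η ≤ δ / (2 * D ^ 2) := le_trans (min_le_left _ _) (min_le_right _ _)
    rw [le_div_iff₀ (by positivity)] at h1; linarith
  have hηδ : η * δ ≤ 1 := by
    have h1 : η ≤ 1 / δ := le_trans (min_le_right _ _) (min_le_left _ _)
    rw [le_div_iff₀ hδ] at h1; linarith
  have hη4 : 2 * (η * D) + η * δ / 2 ≤ D := by
    have h1 : η ≤ 2 * D / (4 * D + δ) := le_trans (min_le_right _ _) (min_le_right _ _)
    rw [le_div_iff₀ (by positivity)] at h1; nlinarith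
  set ρ : ℝ := 1 - η * δ / 2 with hρ_def
  have hρ0 : 0 < ρ := by simp only [hρ_def]; nlinarith
  have hρ1 : ρ < 1 := by simp only [hρ_def]; nlinarith [mul_pos hη hδ]
  -- measurability
  have hXm : ∀ t, Measurable (X t) := fun t => (hadapted t).mono (F.le t) le_rfl
  -- a.e. upper bound on X t
  have hub : ∀ t : ℕ, ∀ᵐ ω ∂P, X t ω ≤ b + t * D := by
    intro t
    induction t with
    | zero => filter_upwards [h0] with ω h; simp [h]
    | succ t ih =>
      filter_upwards [ih, hbdd t] with ω h1 h2
      have := (abs_le.1 h2).2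
      push_cast; linarith
  -- the exponential process
  set g : ℕ → Ω → ℝ := fun t ω => Real.exp (η * X t ω) with hg_def
  have hg_meas : ∀ t, Measurable (g t) := fun t => (Real.measurable_exp).comp ((hXm t).const_mul η)
  have hg_int : ∀ t, Integrable (g t) P := by
    intro t
    refine Integrable.mono' (integrable_const (Real.exp (η * (b + t * D)))) (hg_meas t).aestronglyMeasurable ?_
    filter_upwards [hub t] with ω h
    rw [Real.norm_eq_abs, abs_of_pos (Real.exp_pos _)]
    exact Real.exp_le_exp.2 (by nlinarith)
  have hg_nonneg : ∀ t ω, 0 ≤ g t ω := fun t ω => (Real.exp_pos _).le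
  -- the key one-step recursion
  have hstep : ∀ t : ℕ, ∫ ω, g (t + 1) ω ∂P ≤ ρ * ∫ ω, g t ω ∂P + D * Real.exp (η * κ) := by
    intro t
    set A : Set Ω := {ω | κ ≤ X t ω} with hA_def
    have hAF : MeasurableSet[F t] A := (hadapted t) measurableSet_Ici
    have hA : MeasurableSet A := F.le t _ hAF
    set Δ : Ω → ℝ := X (t + 1) - X t with hΔ_def
    have hΔ_apply : ∀ ω, Δ ω = X (t + 1) ω - X t ω := fun ω => rfl
    have hΔ_meas : Measurable Δ := (hXm (t + 1)).sub (hXm t)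
    have hΔ_int : Integrable Δ P := by
      refine Integrable.mono' (integrable_const D) hΔ_meas.aestronglyMeasurable ?_
      filter_upwards [hbdd t] with ω h
      rw [Real.norm_eq_abs]; exact h
    set C : ℝ := Real.exp (η * (b + t * D)) with hC_def
    have hC_pos : 0 < C := Real.exp_pos _
    have hgtC : ∀ᵐ ω ∂P, g t ω ≤ C := by
      filter_upwards [hub t] with ω h
      exact Real.exp_le_exp.2 (by nlinarith)
    -- the F t-measurable factor
    set f : Ω → ℝ := A.indicator (g t) with hf_def
    have hgt_smF : StronglyMeasurable[F t] (g t) :=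
      Real.continuous_exp.comp_stronglyMeasurable ((hadapted t).const_mul η).stronglyMeasurable
    have hf_smF : StronglyMeasurable[F t] f := hgt_smF.indicator hAF
    have hf_sm : StronglyMeasurable f := hf_smF.mono (F.le t)
    have hf_nonneg : ∀ ω, 0 ≤ f ω := fun ω =>
      Set.indicator_nonneg (fun ω _ => hg_nonneg t ω) ω
    have hf_le_gt : ∀ ω, f ω ≤ g t ω := fun ω =>
      Set.indicator_le_self' (fun ω _ => hg_nonneg t ω) ω
    have hf_bound : ∀ᵐ ω ∂P, |f ω| ≤ C := by
      filter_upwards [hgtC] with ω h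
      rw [abs_of_nonneg (hf_nonneg ω)]
      exact (hf_le_gt ω).trans h
    have hf_int : Integrable f P := by
      refine Integrable.mono' (integrable_const C) hf_sm.aestronglyMeasurable ?_
      filter_upwards [hf_bound] with ω h; rwa [Real.norm_eq_abs]
    have hfΔ_int : Integrable (f * Δ) P := by
      refine Integrable.mono' (integrable_const (C * D))
        (hf_sm.aestronglyMeasurable.mul hΔ_meas.aestronglyMeasurable) ?_
      filter_upwards [hf_bound, hbdd t] with ω h1 h2
      rw [Pi.mul_apply, Real.norm_eq_abs, abs_mul]
      exact mul_le_mul h1 h2 (abs_nonneg _) hC_pos.le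
    -- pull-out property and drift
    haveI : SigmaFinite (P.trim (F.le t)) := by infer_instance
    have hpull : P[f * Δ|F t] =ᵐ[P] f * P[Δ|F t] :=
      condExp_mul_of_stronglyMeasurable_left hf_smF hfΔ_int hΔ_int
    have hint_eq : ∫ ω, (f * Δ) ω ∂P = ∫ ω, f ω * (P[Δ|F t]) ω ∂P := by
      calc ∫ ω, (f * Δ) ω ∂P = ∫ ω, (P[f * Δ|F t]) ω ∂P := (integral_condExp (F.le t)).symm
        _ = ∫ ω, (f * P[Δ|F t]) ω ∂P := integral_congr_ae hpull
        _ = ∫ ω, f ω * (P[Δ|F t]) ω ∂P := by simp only [Pi.mul_apply]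
    have hprod_int : Integrable (fun ω => f ω * (P[Δ|F t]) ω) P := by
      refine Integrable.mono'
        (((integrable_condExp (m := F t) (μ := P) (f := Δ)).norm).const_mul C)
        (hf_sm.aestronglyMeasurable.mul integrable_condExp.aestronglyMeasurable) ?_
      filter_upwards [hf_bound] with ω h
      rw [Real.norm_eq_abs, abs_mul]
      exact mul_le_mul_of_nonneg_right h (abs_nonneg _)
    have hprod_le : ∀ᵐ ω ∂P, f ω * (P[Δ|F t]) ω ≤ -δ * f ω := by
      filter_upwards [hdrift t] with ω hω
      by_cases h : ω ∈ A
      · have h1 : f ω = g t ω := Set.indicator_of_mem h _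
        have h2 : (P[Δ|F t]) ω ≤ -δ := hω h
        rw [h1]
        nlinarith [hg_nonneg t ω]
      · simp [hf_def, Set.indicator_of_notMem h]
    have hdrift_int : ∫ ω, (f * Δ) ω ∂P ≤ -δ * ∫ ω, f ω ∂P := by
      rw [hint_eq, ← integral_const_mul]
      exact integral_mono_ae hprod_int (hf_int.const_mul _) hprod_le
    -- rewrite set integral over A of g t * Δ
    have hgtΔ_int : Integrable (fun ω => g t ω * Δ ω) P := by
      refine Integrable.mono' (integrable_const (C * D))
        ((hg_meas t).aestronglyMeasurable.mul hΔ_meas.aestronglyMeasurable) ?_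
      filter_upwards [hgtC, hbdd t] with ω h1 h2
      rw [Real.norm_eq_abs, abs_mul, abs_of_nonneg (hg_nonneg t ω)]
      exact mul_le_mul h1 h2 (abs_nonneg _) hC_pos.le
    have hsetΔ : ∫ ω in A, g t ω * Δ ω ∂P = ∫ ω, (f * Δ) ω ∂P := by
      rw [← integral_indicator hA]
      refine integral_congr_ae (ae_of_all _ fun ω => ?_)
      by_cases h : ω ∈ A
      · simp [hf_def, Set.indicator_of_mem h]
      · simp [hf_def, Set.indicator_of_notMem h]
    have hsetf : ∫ ω, f ω ∂P = ∫ ω in A, g t ω ∂P := integral_indicator hA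
    -- term over A
    have hSnn : 0 ≤ ∫ ω in A, g t ω ∂P :=
      setIntegral_nonneg hA fun ω _ => hg_nonneg t ω
    have htermA : ∫ ω in A, g (t + 1) ω ∂P ≤ ρ * ∫ ω in A, g t ω ∂P := by
      have hpt : ∀ᵐ ω ∂P, ω ∈ A →
          g (t + 1) ω ≤ (1 + η ^ 2 * D ^ 2) * g t ω + η * (g t ω * Δ ω) := by
        filter_upwards [hbdd t] with ω h2 _
        have hsplitexp : g (t + 1) ω = g t ω * Real.exp (η * Δ ω) := by
          rw [hg_def, ← Real.exp_add, hΔ_apply]; ring_nf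
        have habs : |η * Δ ω| ≤ 1 := by
          rw [abs_mul, abs_of_pos hη, hΔ_apply]
          calc η * |X (t + 1) ω - X t ω| ≤ η * D := by
                exact mul_le_mul_of_nonneg_left h2 hη.le
            _ ≤ 1 := hηD1
        have hexp := exp_le_one_add_add_sq habs
        have hΔsq : (η * Δ ω) ^ 2 ≤ η ^ 2 * D ^ 2 := by
          have habsΔ : |Δ ω| ≤ D := by rw [hΔ_apply]; exact h2
          have h := abs_le.1 habsΔ
          calc (η * Δ ω) ^ 2 = η ^ 2 * Δ ω ^ 2 := by ring
            _ ≤ η ^ 2 * D ^ 2 := mul_le_mul_of_nonneg_left (sq_le_sq' h.1 h.2) (sq_nonneg η)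
        rw [hsplitexp]
        have hmul := mul_le_mul_of_nonneg_left hexp (hg_nonneg t ω)
        have hmul2 := mul_le_mul_of_nonneg_left hΔsq (hg_nonneg t ω)
        nlinarith [hmul, hmul2]
      have h1 : ∫ ω in A, g (t + 1) ω ∂P ≤
          ∫ ω in A, ((1 + η ^ 2 * D ^ 2) * g t ω + η * (g t ω * Δ ω)) ∂P := by
        refine integral_mono_ae ((hg_int (t + 1)).restrict)
          ((((hg_int t).const_mul _).add (hgtΔ_int.const_mul η)).restrict) ?_
        exact (ae_restrict_iff' hA).2 hpt
      have h2 : ∫ ω in A, ((1 + η ^ 2 * D ^ 2) * g t ω + η * (g t ω * Δ ω)) ∂P =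
          (1 + η ^ 2 * D ^ 2) * ∫ ω in A, g t ω ∂P + η * ∫ ω in A, g t ω * Δ ω ∂P := by
        rw [integral_add (((hg_int t).const_mul _).restrict) ((hgtΔ_int.const_mul η).restrict),
          integral_const_mul, integral_const_mul]
      have h3 : ∫ ω in A, g t ω * Δ ω ∂P ≤ -δ * ∫ ω in A, g t ω ∂P := by
        rw [hsetΔ, ← hsetf]; exact hdrift_int
      have hcoef : 1 + η ^ 2 * D ^ 2 + η * (-δ) ≤ ρ := by
        have := mul_le_mul_of_nonneg_left hηD2 hη.le
        simp only [hρ_def]; nlinarith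
      calc ∫ ω in A, g (t + 1) ω ∂P
          ≤ (1 + η ^ 2 * D ^ 2) * ∫ ω in A, g t ω ∂P + η * ∫ ω in A, g t ω * Δ ω ∂P := by
            rw [← h2]; exact h1
        _ ≤ (1 + η ^ 2 * D ^ 2) * ∫ ω in A, g t ω ∂P + η * (-δ * ∫ ω in A, g t ω ∂P) :=
            by nlinarith [mul_le_mul_of_nonneg_left h3 hη.le]
        _ = (1 + η ^ 2 * D ^ 2 + η * (-δ)) * ∫ ω in A, g t ω ∂P := by ring
        _ ≤ ρ * ∫ ω in A, g t ω ∂P := mul_le_mul_of_nonneg_right hcoef hSnn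
    -- term over Aᶜ
    have htermB : ∫ ω in Aᶜ, g (t + 1) ω ∂P ≤
        ρ * ∫ ω in Aᶜ, g t ω ∂P + D * Real.exp (η * κ) := by
      have hpt : ∀ᵐ ω ∂P, ω ∈ Aᶜ →
          g (t + 1) ω ≤ ρ * g t ω + D * Real.exp (η * κ) := by
        filter_upwards [hbdd t] with ω h2 h
        have hXtκ : X t ω < κ := by
          simpa [hA_def, not_le] using h
        have hgtκ : g t ω ≤ Real.exp (η * κ) :=
          Real.exp_le_exp.2 (mul_le_mul_of_nonneg_left hXtκ.le hη.le)
        have hsplitexp : g (t + 1) ω = g t ω * Real.exp (η * Δ ω) := by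
          rw [hg_def, ← Real.exp_add, hΔ_apply]; ring_nf
        have hexpΔ : Real.exp (η * Δ ω) ≤ Real.exp (η * D) := by
          refine Real.exp_le_exp.2 ?_
          rw [hΔ_apply]
          exact mul_le_mul_of_nonneg_left ((le_abs_self _).trans h2) hη.le
        have hexpD : Real.exp (η * D) ≤ 1 + 2 * (η * D) := by
          have habs : |η * D| ≤ 1 := by
            rw [abs_of_pos (mul_pos hη hD)]; exact hηD1
          have := exp_le_one_add_add_sq habs
          nlinarith [mul_pos hη hD]
        have hρle : ρ ≤ Real.exp (η * D) := by
          have := Real.add_one_le_exp (η * D)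
          simp only [hρ_def]; nlinarith [mul_pos hη hD, mul_pos hη hδ]
        rw [hsplitexp]
        calc g t ω * Real.exp (η * Δ ω) ≤ g t ω * Real.exp (η * D) :=
              mul_le_mul_of_nonneg_left hexpΔ (hg_nonneg t ω)
          _ = ρ * g t ω + (Real.exp (η * D) - ρ) * g t ω := by ring
          _ ≤ ρ * g t ω + D * Real.exp (η * κ) := by
              have h1 : Real.exp (η * D) - ρ ≤ D := by
                simp only [hρ_def] at hexpD ⊢; nlinarith
              have h2' : (Real.exp (η * D) - ρ) * g t ω ≤ D * Real.exp (η * κ) := by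
                have hnn : 0 ≤ Real.exp (η * D) - ρ := by linarith
                calc (Real.exp (η * D) - ρ) * g t ω ≤ (Real.exp (η * D) - ρ) * Real.exp (η * κ) :=
                      mul_le_mul_of_nonneg_left hgtκ hnn
                  _ ≤ D * Real.exp (η * κ) :=
                      mul_le_mul_of_nonneg_right h1 (Real.exp_pos _).le
              linarith
      have h1 : ∫ ω in Aᶜ, g (t + 1) ω ∂P ≤
          ∫ ω in Aᶜ, (ρ * g t ω + D * Real.exp (η * κ)) ∂P := by
        refine integral_mono_ae ((hg_int (t + 1)).restrict)
          ((((hg_int t).const_mul _).add (integrable_const _)).restrict) ?_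
        exact (ae_restrict_iff' hA.compl).2 hpt
      have h2 : ∫ ω in Aᶜ, (ρ * g t ω + D * Real.exp (η * κ)) ∂P =
          ρ * ∫ ω in Aᶜ, g t ω ∂P + (P Aᶜ).toReal * (D * Real.exp (η * κ)) := by
        rw [integral_add (((hg_int t).const_mul _).restrict) (integrable_const _),
          integral_const_mul, setIntegral_const, smul_eq_mul]; rfl
      have h3 : (P Aᶜ).toReal ≤ 1 := by
        have := prob_le_one (μ := P) (s := Aᶜ)
        simpa using ENNReal.toReal_mono ENNReal.one_ne_top this
      have h4 : 0 ≤ D * Real.exp (η * κ) := by positivity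
      calc ∫ ω in Aᶜ, g (t + 1) ω ∂P ≤
          ρ * ∫ ω in Aᶜ, g t ω ∂P + (P Aᶜ).toReal * (D * Real.exp (η * κ)) := by
            rw [← h2]; exact h1
        _ ≤ ρ * ∫ ω in Aᶜ, g t ω ∂P + D * Real.exp (η * κ) := by nlinarith
    have hsplit : ∫ ω, g (t + 1) ω ∂P =
        ∫ ω in A, g (t + 1) ω ∂P + ∫ ω in Aᶜ, g (t + 1) ω ∂P :=
      (integral_add_compl hA (hg_int (t + 1))).symm
    have hsplit' : ∫ ω, g t ω ∂P = ∫ ω in A, g t ω ∂P + ∫ ω in Aᶜ, g t ω ∂P :=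
      (integral_add_compl hA (hg_int t)).symm
    rw [hsplit, hsplit']
    nlinarith [htermA, htermB]
  -- induction
  have hm : ∀ t : ℕ, ∫ ω, g t ω ∂P ≤
      ρ ^ t * Real.exp (η * b) + (1 - ρ ^ t) / (1 - ρ) * D * Real.exp (η * κ) := by
    intro t
    induction t with
    | zero =>
      have : ∫ ω, g 0 ω ∂P = Real.exp (η * b) := by
        rw [show ∫ ω, g 0 ω ∂P = ∫ _, Real.exp (η * b) ∂P from
          integral_congr_ae (by filter_upwards [h0] with ω h; simp [hg_def, h])]
        simp [measure_univ]
      simp [this]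
    | succ t ih =>
      have h1 := hstep t
      have h2 : ρ * ∫ ω, g t ω ∂P ≤
          ρ * (ρ ^ t * Real.exp (η * b) + (1 - ρ ^ t) / (1 - ρ) * D * Real.exp (η * κ)) :=
        mul_le_mul_of_nonneg_left ih hρ0.le
      have hkey : ρ * (ρ ^ t * Real.exp (η * b) + (1 - ρ ^ t) / (1 - ρ) * D * Real.exp (η * κ))
          + D * Real.exp (η * κ) =
          ρ ^ (t + 1) * Real.exp (η * b) + (1 - ρ ^ (t + 1)) / (1 - ρ) * D * Real.exp (η * κ) := by
        have h1ρ : (1 : ℝ) - ρ ≠ 0 := by linarith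
        field_simp
        ring
      calc ∫ ω, g (t + 1) ω ∂P ≤ ρ * ∫ ω, g t ω ∂P + D * Real.exp (η * κ) := h1
        _ ≤ ρ * (ρ ^ t * Real.exp (η * b) + (1 - ρ ^ t) / (1 - ρ) * D * Real.exp (η * κ))
            + D * Real.exp (η * κ) := by linarith
        _ = _ := hkey
  -- conclude via Markov's inequality
  refine ⟨η, hη, ρ, hρ0, hρ1, fun t u hu => ?_⟩
  have hmarkov := mul_meas_ge_le_integral_of_nonneg
    (ae_of_all _ fun ω => hg_nonneg t ω) (hg_int t) (Real.exp (η * u))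
  have hset : {ω | Real.exp (η * u) ≤ g t ω} = {ω | u ≤ X t ω} := by
    ext ω
    simp only [Set.mem_setOf_eq, hg_def, Real.exp_le_exp]
    exact ⟨fun h => le_of_mul_le_mul_left h hη, fun h => mul_le_mul_of_nonneg_left h hη.le⟩
  rw [hset] at hmarkov
  have hεpos : 0 < Real.exp (η * u) := Real.exp_pos _
  have h1 : (P {ω | u ≤ X t ω}).toReal ≤ (∫ ω, g t ω ∂P) / Real.exp (η * u) := by
    rw [le_div_iff₀ hεpos, mul_comm]; exact hmarkov
  refine h1.trans ?_
  have h2 : (∫ ω, g t ω ∂P) / Real.exp (η * u) ≤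
      (ρ ^ t * Real.exp (η * b) + (1 - ρ ^ t) / (1 - ρ) * D * Real.exp (η * κ))
        / Real.exp (η * u) := by
    gcongr
    exact hm t
  refine h2.trans_eq ?_
  rw [mul_sub, mul_sub, Real.exp_sub, Real.exp_sub]
  field_simp
end

section
/- Let κ be a Markov probability kernel on ℝ^d for which there exist ε > 0 and c_* > 0 such that for every x ∈ ℝ^d and every Borel set A: κ(x, A) ≥ c_* · Leb(A ∩ B_ε(x)), where B_ε(x) is the closed ball of radius ε around x. Then every invariant probability measure Γ of κ satisfies Leb ≪ Γ; i.e., every Borel set of positive Lebesgue measure has positive Γ-measure (in particular Γ(B_r(z)) > 0 for every z ∈ ℝ^d and r > 0). -/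
open MeasureTheory ProbabilityTheory Metric
open scoped ENNReal

/-- If the one-step transition measures of a Markov kernel on `ℝ^d` are
uniformly minorized by `c_* · Leb(· ∩ B_ε(x))`, then Lebesgue measure is absolutely
continuous with respect to every invariant probability measure. -/
theorem lebesgue_absolutely_continuous_wrt_invariant (d : ℕ)
    (κ : Kernel (EuclideanSpace ℝ (Fin d)) (EuclideanSpace ℝ (Fin d)))
    (hκ : IsMarkovKernel κ)
    (ε cstar : ℝ) (hε : 0 < ε) (hc : 0 < cstar)
    (hminor : ∀ x, ∀ A : Set (EuclideanSpace ℝ (Fin d)), MeasurableSet A →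
      ENNReal.ofReal cstar * volume (A ∩ Metric.closedBall x ε) ≤ κ x A)
    (Γ : Measure (EuclideanSpace ℝ (Fin d))) (hΓ : IsProbabilityMeasure Γ)
    (hinv : ∀ A : Set (EuclideanSpace ℝ (Fin d)), MeasurableSet A → Γ A = ∫⁻ x, κ x A ∂Γ) :
    (volume : Measure (EuclideanSpace ℝ (Fin d))) ≪ Γ := by
  have hcne : ENNReal.ofReal cstar ≠ 0 := by
    simp [ENNReal.ofReal_eq_zero, not_le, hc]
  -- generic lower bound: if `κ x A ≥ C` on a ball, then `Γ A ≥ C * Γ ball`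
  have key : ∀ (A : Set (EuclideanSpace ℝ (Fin d))), MeasurableSet A →
      ∀ (p : EuclideanSpace ℝ (Fin d)) (s : ℝ) (C : ℝ≥0∞),
      (∀ x ∈ ball p s, C ≤ κ x A) → C * Γ (ball p s) ≤ Γ A := by
    intro A hA p s C hC
    rw [hinv A hA, ← lintegral_indicator_const measurableSet_ball C]
    refine lintegral_mono fun x => ?_
    by_cases hx : x ∈ ball p s
    · simpa [Set.indicator_of_mem hx] using hC x hx
    · simp [Set.indicator_of_notMem hx]
  -- one-step spreading of mass
  have step : ∀ p q : EuclideanSpace ℝ (Fin d), dist p q < ε →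
      (∀ s > 0, 0 < Γ (ball p s)) → ∀ t > 0, 0 < Γ (ball q t) := by
    intro p q hpq hp t ht
    set s : ℝ := (ε - dist p q) / 2 with hs
    have hs0 : 0 < s := by simp only [hs]; linarith
    set u : ℝ := min t s with hu
    have hu0 : 0 < u := lt_min ht hs0
    have hsub : ∀ x ∈ ball p s, ball q u ⊆ ball q t ∩ closedBall x ε := by
      intro x hx y hy
      have h1 : dist y q < u := mem_ball.mp hy
      have h2 : dist x p < s := mem_ball.mp hx
      refine ⟨mem_ball.mpr (lt_of_lt_of_le h1 (min_le_left _ _)), mem_closedBall.mpr ?_⟩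
      have h3 : dist y x ≤ dist y q + dist q p + dist p x := dist_triangle4 y q p x
      have h4 : dist q p = dist p q := dist_comm q p
      have h5 : dist p x = dist x p := dist_comm p x
      have h6 : u ≤ s := min_le_right _ _
      linarith
    have hCle : ∀ x ∈ ball p s, ENNReal.ofReal cstar * volume (ball q u) ≤ κ x (ball q t) := by
      intro x hx
      refine le_trans ?_ (hminor x (ball q t) measurableSet_ball)
      exact mul_le_mul_right (measure_mono (hsub x hx)) _
    have hpos : 0 < ENNReal.ofReal cstar * volume (ball q u) * Γ (ball p s) := by
      refine ENNReal.mul_pos (ENNReal.mul_pos hcne ?_).ne' ((hp s hs0).ne')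
      exact (measure_ball_pos volume q hu0).ne'
    exact lt_of_lt_of_le hpos (key (ball q t) measurableSet_ball p s _ hCle)
  -- iterated spreading: chain of steps of length `ε/2`
  have chain : ∀ (n : ℕ) (p q : EuclideanSpace ℝ (Fin d)),
      (∀ s > 0, 0 < Γ (ball p s)) → dist p q ≤ n * (ε / 2) →
      ∀ t > 0, 0 < Γ (ball q t) := by
    intro n
    induction n with
    | zero =>
      intro p q hp hd t ht
      have : p = q := by
        rw [← dist_le_zero]; simpa using hd
      exact this ▸ hp t ht
    | succ n ih =>
      intro p q hp hd t ht
      by_cases h : dist p q ≤ n * (ε / 2)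
      · exact ih p q hp h t ht
      push_neg at h
      have hD : 0 < dist p q := lt_of_le_of_lt (by positivity) h
      set c : ℝ := (n * (ε / 2)) / dist p q with hcdef
      have hc0 : 0 ≤ c := by positivity
      have hc1 : c ≤ 1 := by
        rw [hcdef, div_le_one hD]; exact h.le
      have hcD : c * dist p q = n * (ε / 2) := div_mul_cancel₀ _ hD.ne'
      set q' : EuclideanSpace ℝ (Fin d) := p + c • (q - p) with hq'
      have hnorm : ‖q - p‖ = dist p q := by rw [dist_eq_norm, norm_sub_rev]
      have hpq' : dist p q' = n * (ε / 2) := by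
        rw [dist_eq_norm]
        have : p - q' = (-c) • (q - p) := by rw [hq']; module
        rw [this, norm_smul, Real.norm_eq_abs, abs_neg, abs_of_nonneg hc0, hnorm, hcD]
      have hq'q : dist q' q < ε := by
        rw [dist_eq_norm]
        have : q' - q = (c - 1) • (q - p) := by rw [hq']; module
        rw [this, norm_smul, Real.norm_eq_abs, abs_of_nonpos (by linarith), hnorm]
        have hd' : dist p q ≤ (n + 1) * (ε / 2) := by push_cast at hd ⊢; exact hd
        nlinarith
      exact step q' q hq'q (fun s hs => ih p q' hp hpq'.le s hs) t ht
  -- there is a point all of whose balls have positive `Γ`-measure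
  have hsupp : ∃ p : EuclideanSpace ℝ (Fin d), ∀ s > 0, 0 < Γ (ball p s) := by
    by_contra hcon
    push_neg at hcon
    choose r hr hΓr using hcon
    have hΓr' : ∀ p, Γ (ball p (r p)) = 0 := fun p => le_antisymm (hΓr p) zero_le
    obtain ⟨T, hTc, hTeq⟩ := TopologicalSpace.isOpen_iUnion_countable
      (fun p => ball p (r p)) (fun p => isOpen_ball)
    have hU : Γ (⋃ p, ball p (r p)) = 0 := by
      rw [← hTeq]
      exact (measure_biUnion_null_iff hTc).mpr fun p _ => hΓr' p
    have huniv : Γ (Set.univ : Set (EuclideanSpace ℝ (Fin d))) = 0 :=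
      measure_mono_null (fun x _ => Set.mem_iUnion.mpr ⟨x, mem_ball_self (hr x)⟩) hU
    simp [measure_univ] at huniv
  -- hence all balls have positive `Γ`-measure
  have allpos : ∀ (q : EuclideanSpace ℝ (Fin d)) (t : ℝ), 0 < t → 0 < Γ (ball q t) := by
    obtain ⟨p, hp⟩ := hsupp
    intro q t ht
    obtain ⟨n, hn⟩ := exists_nat_ge (dist p q / (ε / 2))
    have : dist p q ≤ n * (ε / 2) := by
      rw [div_le_iff₀ (by positivity)] at hn
      linarith [hn]
    exact chain n p q hp this t ht
  -- conclude absolute continuity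
  refine Measure.AbsolutelyContinuous.mk ?_
  intro A hA hΓA
  by_contra hvol
  -- find a small ball where `A` has positive volume
  obtain ⟨w, hw⟩ := TopologicalSpace.exists_dense_seq (EuclideanSpace ℝ (Fin d))
  have hcover : A ⊆ ⋃ n, A ∩ closedBall (w n) (ε / 2) := by
    intro a ha
    obtain ⟨n, hn⟩ := Metric.denseRange_iff.mp hw a (ε / 2) (by positivity)
    exact Set.mem_iUnion.mpr ⟨n, ha, mem_closedBall.mpr hn.le⟩
  have hex : ∃ n, volume (A ∩ closedBall (w n) (ε / 2)) ≠ 0 := by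
    by_contra hall
    push_neg at hall
    exact hvol (measure_mono_null hcover (measure_iUnion_null hall))
  obtain ⟨n, hn⟩ := hex
  set x₀ := w n with hx₀
  set v := volume (A ∩ closedBall x₀ (ε / 2)) with hv
  have hCle : ∀ x ∈ ball x₀ (ε / 2), ENNReal.ofReal cstar * v ≤ κ x A := by
    intro x hx
    refine le_trans ?_ (hminor x A hA)
    refine mul_le_mul_right (measure_mono (Set.inter_subset_inter_right _ ?_)) _
    intro y hy
    have h1 : dist y x₀ ≤ ε / 2 := mem_closedBall.mp hy
    have h2 : dist x x₀ < ε / 2 := mem_ball.mp hx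
    exact mem_closedBall.mpr (le_trans (dist_triangle y x₀ x)
      (by rw [dist_comm x₀ x]; linarith))
  have hpos : 0 < ENNReal.ofReal cstar * v * Γ (ball x₀ (ε / 2)) :=
    ENNReal.mul_pos (ENNReal.mul_pos hcne hn).ne' (allpos x₀ (ε / 2) (by positivity)).ne'
  have := lt_of_lt_of_le hpos (key A hA x₀ (ε / 2) _ hCle)
  rw [hΓA] at this
  exact lt_irrefl _ this
end

section
/- Let κ be a Markov probability kernel on a standard Borel space X, and let μ be a nonzero σ-finite measure on X such that every invariant probability measure of κ is equivalent to μ (mutually absolutely continuous with μ). Then κ has at most one invariant probability measure. -/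
open MeasureTheory ProbabilityTheory
open scoped ENNReal

private lemma meas_eq_of_le_of_univ_le {X : Type} [MeasurableSpace X] {a b : Measure X}
    [IsFiniteMeasure b] (hab : a ≤ b) (h : b Set.univ ≤ a Set.univ) : a = b := by
  ext t ht
  refine le_antisymm (Measure.le_iff'.1 hab t) ?_
  have h1 : a t + a tᶜ = a Set.univ := measure_add_measure_compl ht
  have h2 : b t + b tᶜ = b Set.univ := measure_add_measure_compl ht
  have hc : a tᶜ ≤ b tᶜ := Measure.le_iff'.1 hab tᶜ
  have : b t + b tᶜ ≤ a t + b tᶜ := by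
    calc b t + b tᶜ = b Set.univ := h2
      _ ≤ a Set.univ := h
      _ = a t + a tᶜ := h1.symm
      _ ≤ a t + b tᶜ := add_le_add_right hc _
  exact (ENNReal.add_le_add_iff_right (measure_ne_top b tᶜ)).1 this

/-- If every invariant probability measure of a Markov kernel on a standard
Borel space is equivalent (mutually absolutely continuous) to a fixed nonzero σ-finite
measure `μ`, then the kernel has at most one invariant probability measure. -/
theorem unique_invariant_of_equivalent (X : Type) (mX : MeasurableSpace X)
    (hsb : StandardBorelSpace X)
    (κ : Kernel X X) (hκ : IsMarkovKernel κ)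
    (μ : Measure X) (hμ0 : μ ≠ 0) (hμσ : SigmaFinite μ)
    (hequiv : ∀ Γ : Measure X, IsProbabilityMeasure Γ →
      (∀ A : Set X, MeasurableSet A → Γ A = ∫⁻ x, κ x A ∂Γ) →
      Γ ≪ μ ∧ μ ≪ Γ) :
    ∀ Γ₁ Γ₂ : Measure X, IsProbabilityMeasure Γ₁ → IsProbabilityMeasure Γ₂ →
      (∀ A : Set X, MeasurableSet A → Γ₁ A = ∫⁻ x, κ x A ∂Γ₁) →
      (∀ A : Set X, MeasurableSet A → Γ₂ A = ∫⁻ x, κ x A ∂Γ₂) →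
      Γ₁ = Γ₂ := by
  intro Γ₁ Γ₂ hP1 hP2 hinv1 hinv2
  by_contra hne
  -- reformulate invariance via `bind`
  have hbind : ∀ (Γ : Measure X), (∀ A, MeasurableSet A → Γ A = ∫⁻ x, κ x A ∂Γ) →
      Γ.bind κ = Γ := by
    intro Γ h
    ext A hA
    rw [Measure.bind_apply hA κ.measurable.aemeasurable, ← h A hA]
  have hb1 : Γ₁.bind κ = Γ₁ := hbind Γ₁ hinv1
  have hb2 : Γ₂.bind κ = Γ₂ := hbind Γ₂ hinv2
  -- bind is monotone and preserves total mass
  have hbm : ∀ {ρ σ : Measure X}, ρ ≤ σ → ρ.bind κ ≤ σ.bind κ := by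
    intro ρ σ h
    rw [Measure.le_iff]
    intro t ht
    rw [Measure.bind_apply ht κ.measurable.aemeasurable, Measure.bind_apply ht κ.measurable.aemeasurable]
    exact lintegral_mono' h le_rfl
  have hbu : ∀ ρ : Measure X, (ρ.bind κ) Set.univ = ρ Set.univ := by
    intro ρ
    rw [Measure.bind_apply MeasurableSet.univ κ.measurable.aemeasurable]
    simp
  -- Hahn decomposition
  obtain ⟨s, hs, hss, hsc⟩ := hahn_decomposition (μ := Γ₁) (ν := Γ₂)
  set m : Measure X := Γ₂.restrict s + Γ₁.restrict sᶜ with hm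
  have hmt : ∀ t : Set X, MeasurableSet t → m t = Γ₂ (t ∩ s) + Γ₁ (t ∩ sᶜ) := by
    intro t ht
    simp [hm, Measure.restrict_apply ht]
  have hmle1 : m ≤ Γ₁ := by
    rw [Measure.le_iff]
    intro t ht
    rw [hmt t ht]
    calc Γ₂ (t ∩ s) + Γ₁ (t ∩ sᶜ) ≤ Γ₁ (t ∩ s) + Γ₁ (t ∩ sᶜ) :=
          add_le_add_left (hss _ (ht.inter hs) Set.inter_subset_right) _
      _ = Γ₁ t := by
          rw [← Set.diff_eq]
          exact measure_inter_add_diff t hs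
  have hmle2 : m ≤ Γ₂ := by
    rw [Measure.le_iff]
    intro t ht
    rw [hmt t ht]
    calc Γ₂ (t ∩ s) + Γ₁ (t ∩ sᶜ) ≤ Γ₂ (t ∩ s) + Γ₂ (t ∩ sᶜ) :=
          add_le_add_right (hsc _ (ht.inter hs.compl) Set.inter_subset_right) _
      _ = Γ₂ t := by
          rw [← Set.diff_eq]
          exact measure_inter_add_diff t hs
  have hglb : ∀ ρ : Measure X, ρ ≤ Γ₁ → ρ ≤ Γ₂ → ρ ≤ m := by
    intro ρ h1 h2
    rw [Measure.le_iff]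
    intro t ht
    rw [hmt t ht]
    calc ρ t = ρ (t ∩ s) + ρ (t ∩ sᶜ) := by
          rw [← Set.diff_eq]
          exact (measure_inter_add_diff t hs).symm
      _ ≤ Γ₂ (t ∩ s) + Γ₁ (t ∩ sᶜ) :=
          add_le_add (Measure.le_iff'.1 h2 _) (Measure.le_iff'.1 h1 _)
  have hmfin : IsFiniteMeasure m := by
    constructor
    exact lt_of_le_of_lt (Measure.le_iff'.1 hmle1 _) (measure_lt_top Γ₁ _)
  -- m is invariant
  have hmb : m.bind κ = m := by
    have hle : m.bind κ ≤ m :=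
      hglb _ (hb1 ▸ hbm hmle1) (hb2 ▸ hbm hmle2)
    exact meas_eq_of_le_of_univ_le hle (le_of_eq (hbu m).symm)
  set c : ℝ≥0∞ := m Set.univ with hc
  have hcle : c ≤ 1 := by
    calc c ≤ Γ₁ Set.univ := Measure.le_iff'.1 hmle1 _
      _ = 1 := measure_univ
  by_cases hc1 : (1 : ℝ≥0∞) ≤ c
  · -- then m = Γ₁ = Γ₂
    have e1 : m = Γ₁ := meas_eq_of_le_of_univ_le hmle1 (by rw [measure_univ]; exact hc1)
    have e2 : m = Γ₂ := meas_eq_of_le_of_univ_le hmle2 (by rw [measure_univ]; exact hc1)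
    exact hne (e1 ▸ e2)
  · push_neg at hc1
    have hr0 : (1 : ℝ≥0∞) - c ≠ 0 := by
      simp only [ne_eq, tsub_eq_zero_iff_le, not_le]
      exact hc1
    have hrtop : (1 : ℝ≥0∞) - c ≠ ⊤ := by
      exact ne_top_of_le_ne_top ENNReal.one_ne_top tsub_le_self
    set r : ℝ≥0∞ := ((1 : ℝ≥0∞) - c)⁻¹ with hrdef
    -- the residual measures
    set a : Measure X := Γ₁ - m with ha
    set b : Measure X := Γ₂ - m with hbdef
    have hbadd : ∀ ρ σ : Measure X, (ρ + σ).bind κ = ρ.bind κ + σ.bind κ := by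
      intro ρ σ
      ext t ht
      rw [Measure.bind_apply ht κ.measurable.aemeasurable, Measure.add_apply,
        Measure.bind_apply ht κ.measurable.aemeasurable, Measure.bind_apply ht κ.measurable.aemeasurable,
        lintegral_add_measure]
    have hinv_res : ∀ Γ : Measure X, Γ.bind κ = Γ → IsProbabilityMeasure Γ → m ≤ Γ →
        (Γ - m).bind κ = Γ - m := by
      intro Γ hΓ _ hmle
      have hsum : (Γ - m) + m = Γ := Measure.sub_add_cancel_of_le hmle
      have : (Γ - m).bind κ + m = Γ - m + m := by
        calc (Γ - m).bind κ + m = (Γ - m).bind κ + m.bind κ := by rw [hmb]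
          _ = ((Γ - m) + m).bind κ := (hbadd _ _).symm
          _ = Γ.bind κ := by rw [hsum]
          _ = Γ := hΓ
          _ = (Γ - m) + m := hsum.symm
      calc (Γ - m).bind κ = (Γ - m).bind κ + m - m := (Measure.add_sub_cancel).symm
        _ = (Γ - m) + m - m := by rw [this]
        _ = Γ - m := Measure.add_sub_cancel
    have hainv : a.bind κ = a := hinv_res Γ₁ hb1 hP1 hmle1
    have hbinv : b.bind κ = b := hinv_res Γ₂ hb2 hP2 hmle2
    have hauniv : a Set.univ = 1 - c := by
      rw [ha, Measure.sub_apply MeasurableSet.univ hmle1, measure_univ]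
    have hbuniv : b Set.univ = 1 - c := by
      rw [hbdef, Measure.sub_apply MeasurableSet.univ hmle2, measure_univ]
    -- a vanishes on sᶜ, b vanishes on s
    have hasc : a sᶜ = 0 := by
      rw [ha, Measure.sub_apply hs.compl hmle1, hmt _ hs.compl]
      simp [Set.compl_inter_self]
    have hbs : b s = 0 := by
      rw [hbdef, Measure.sub_apply hs hmle2, hmt _ hs]
      simp [Set.inter_compl_self]
    -- normalized residuals are invariant probability measures
    have hnorm : ∀ ρ : Measure X, ρ.bind κ = ρ → ρ Set.univ = 1 - c →
        IsProbabilityMeasure (r • ρ) ∧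
        (∀ A : Set X, MeasurableSet A → (r • ρ) A = ∫⁻ x, κ x A ∂(r • ρ)) := by
      intro ρ hρ hρu
      constructor
      · constructor
        rw [Measure.smul_apply, hρu, smul_eq_mul, hrdef]
        exact ENNReal.inv_mul_cancel hr0 hrtop
      · intro A hA
        rw [lintegral_smul_measure, Measure.smul_apply, smul_eq_mul,
          ← Measure.bind_apply hA κ.measurable.aemeasurable, hρ, smul_eq_mul]
    obtain ⟨hPa, hIa⟩ := hnorm a hainv hauniv
    obtain ⟨hPb, hIb⟩ := hnorm b hbinv hbuniv
    have hμa : μ ≪ r • a := (hequiv (r • a) hPa hIa).2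
    have hμb : μ ≪ r • b := (hequiv (r • b) hPb hIb).2
    have hμsc : μ sᶜ = 0 := hμa (by rw [Measure.smul_apply, hasc, smul_eq_mul, mul_zero])
    have hμs : μ s = 0 := hμb (by rw [Measure.smul_apply, hbs, smul_eq_mul, mul_zero])
    apply hμ0
    rw [← Measure.measure_univ_eq_zero, ← Set.union_compl_self s]
    exact le_antisymm (le_trans (measure_union_le s sᶜ) (by rw [hμs, hμsc, add_zero])) (zero_le)
end

section
/- Let κ be a Markov probability kernel on ℝ^d such that κ(x, ·) is absolutely continuous with respect to Lebesgue measure for every x. Suppose that for Lebesgue-almost every z ∈ ℝ^d, the chain started from z satisfies P_{δ_z}(‖Φ_t‖ → ∞) = 0. Then for every x ∈ ℝ^d, P_{δ_x}(‖Φ_t‖ → ∞) = 0; i.e., the chain is non-evanescent from every initial state. -/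
open MeasureTheory ProbabilityTheory Filter

/-- A process `Φ` on `(Ω, P)` is a Markov chain with transition kernel `κ`: each `Φ t` is
measurable and, for every `t` and Borel `B`, the conditional probability of
`{Φ (t+1) ∈ B}` given `σ(Φ 0, …, Φ t)` is `κ (Φ t) B`. -/
def IsMarkovChainWithKernel (d : ℕ)
    (κ : Kernel (EuclideanSpace ℝ (Fin d)) (EuclideanSpace ℝ (Fin d)))
    (Ω : Type) (mΩ : MeasurableSpace Ω) (P : Measure Ω)
    (Φ : ℕ → Ω → EuclideanSpace ℝ (Fin d)) : Prop :=
  (∀ t, Measurable (Φ t)) ∧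
  ∀ (t : ℕ) (B : Set (EuclideanSpace ℝ (Fin d))), MeasurableSet B →
    (fun ω => (κ (Φ t ω) B).toReal) =ᵐ[P]
      P[fun ω => B.indicator (fun _ => (1 : ℝ)) (Φ (t + 1) ω)|
        MeasurableSpace.comap (fun ω (i : Fin (t + 1)) => Φ i ω) MeasurableSpace.pi]


open Set
open scoped ENNReal

lemma exists_countable_piSystem (α : Type*) [m : MeasurableSpace α]
    [MeasurableSpace.CountablyGenerated α] :
    ∃ C : Set (Set α), C.Countable ∧ IsPiSystem C ∧
      MeasurableSpace.generateFrom C = m ∧ Set.univ ∈ C := by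
  set S : Set (Set α) := insert Set.univ (MeasurableSpace.countableGeneratingSet α) with hS
  have hScount : S.Countable :=
    (MeasurableSpace.countable_countableGeneratingSet (α := α)).insert _
  have hSmeas : ∀ s ∈ S, MeasurableSet s := by
    rintro s (rfl | hs)
    · exact MeasurableSet.univ
    · exact MeasurableSpace.measurableSet_countableGeneratingSet hs
  refine ⟨(fun T => ⋂₀ T) '' {T | T.Finite ∧ T ⊆ S ∧ T.Nonempty}, ?_, ?_, ?_, ?_⟩
  · exact Set.Countable.image
      ((Set.countable_setOf_finite_subset hScount).mono
        (fun T hT => And.intro hT.1 hT.2.1)) _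
  · rintro _ ⟨T₁, ⟨hT₁f, hT₁S, hT₁ne⟩, rfl⟩ _ ⟨T₂, ⟨hT₂f, hT₂S, hT₂ne⟩, rfl⟩ _
    exact ⟨T₁ ∪ T₂, ⟨hT₁f.union hT₂f, Set.union_subset hT₁S hT₂S,
      hT₁ne.mono Set.subset_union_left⟩, by simp only [Set.sInter_union]⟩
  · refine le_antisymm (MeasurableSpace.generateFrom_le ?_) ?_
    · rintro _ ⟨T, ⟨hTf, hTS, _⟩, rfl⟩
      exact Set.Finite.measurableSet_sInter hTf fun s hs => hSmeas s (hTS hs)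
    · rw [← MeasurableSpace.generateFrom_countableGeneratingSet (α := α)]
      refine MeasurableSpace.generateFrom_le fun s hs =>
        MeasurableSpace.measurableSet_generateFrom
          ⟨{s}, ⟨Set.finite_singleton s, ?_, Set.singleton_nonempty s⟩, Set.sInter_singleton s⟩
      exact Set.singleton_subset_iff.2 (Set.mem_insert_of_mem _ hs)
  · exact ⟨{Set.univ}, ⟨Set.finite_singleton _, Set.singleton_subset_iff.2 (Set.mem_insert _ _),
      Set.singleton_nonempty _⟩, Set.sInter_singleton _⟩


section
variable {d : ℕ}
local notation "𝔼" => EuclideanSpace ℝ (Fin d)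

/-- One-step Markov property in set-lintegral form, conditioning on `σ(Φ 1, …, Φ (t+1))`. -/
lemma markov_step_setLIntegral (κ : Kernel 𝔼 𝔼) [IsMarkovKernel κ]
    {Ω : Type} {mΩ : MeasurableSpace Ω} (P : Measure Ω) [IsProbabilityMeasure P]
    (Φ : ℕ → Ω → 𝔼) (hΦm : ∀ t, Measurable (Φ t))
    (hMarkov : ∀ (t : ℕ) (B : Set 𝔼), MeasurableSet B →
      (fun ω => (κ (Φ t ω) B).toReal) =ᵐ[P]
        P[fun ω => B.indicator (fun _ => (1 : ℝ)) (Φ (t + 1) ω)|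
          MeasurableSpace.comap (fun ω (i : Fin (t + 1)) => Φ i ω) MeasurableSpace.pi])
    (t : ℕ) {B : Set 𝔼} (hB : MeasurableSet B) {s : Set Ω}
    (hs : MeasurableSet[(MeasurableSpace.comap (fun ω (i : Fin (t + 1)) => Φ (↑i + 1) ω) MeasurableSpace.pi)] s) :
    P (s ∩ Φ (t + 2) ⁻¹' B) = ∫⁻ ω in s, κ (Φ (t + 1) ω) B ∂P := by
  have hpre : MeasurableSet[mΩ] (Φ (t + 2) ⁻¹' B) := (hΦm (t + 2)) hB
  have hκm : Measurable[mΩ] (fun ω => κ (Φ (t + 1) ω) B) :=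
    (Kernel.measurable_coe κ hB).comp (hΦm (t + 1))
  have hm'le : (MeasurableSpace.comap (fun ω (i : Fin (t + 1)) => Φ (↑i + 1) ω) MeasurableSpace.pi) ≤ mΩ :=
    Measurable.comap_le (measurable_pi_lambda
      (fun ω (i : Fin (t + 1)) => Φ (↑i + 1) ω) (fun i => hΦm (↑i + 1)))
  have hmle : (MeasurableSpace.comap (fun ω (i : Fin (t + 2)) => Φ ↑i ω) MeasurableSpace.pi) ≤ mΩ :=
    Measurable.comap_le (measurable_pi_lambda
      (fun ω (i : Fin (t + 2)) => Φ ↑i ω) (fun i => hΦm ↑i))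
  have hm'm : (MeasurableSpace.comap (fun ω (i : Fin (t + 1)) => Φ (↑i + 1) ω) MeasurableSpace.pi) ≤ (MeasurableSpace.comap (fun ω (i : Fin (t + 2)) => Φ ↑i ω) MeasurableSpace.pi) := by
    have hcomp : (fun ω (i : Fin (t + 1)) => Φ (↑i + 1) ω) =
        (fun (v : Fin (t + 2) → 𝔼) (i : Fin (t + 1)) => v i.succ) ∘
          (fun ω (i : Fin (t + 2)) => Φ ↑i ω) := by
      funext ω i
      simp [Fin.val_succ]
    rw [hcomp, ← MeasurableSpace.comap_comp]
    exact MeasurableSpace.comap_mono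
      (Measurable.comap_le (measurable_pi_lambda _ fun i => measurable_pi_apply i.succ))
  haveI : SigmaFinite (P.trim hm'le) := by
    haveI := isFiniteMeasure_trim (μ := P) hm'le; infer_instance
  haveI : SigmaFinite (P.trim hmle) := by
    haveI := isFiniteMeasure_trim (μ := P) hmle; infer_instance
  set f : Ω → ℝ := fun ω => B.indicator (fun _ => (1 : ℝ)) (Φ (t + 2) ω) with hf
  have hfeq : f = (Φ (t + 2) ⁻¹' B).indicator (fun _ => (1 : ℝ)) := by
    funext ω
    by_cases h : Φ (t + 2) ω ∈ B <;>
      simp [hf, Set.indicator_of_mem, Set.indicator_of_notMem, h]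
  have hf_int : Integrable f P := by
    rw [hfeq]; exact (integrable_const (1 : ℝ)).indicator hpre
  set g : Ω → ℝ := fun ω => (κ (Φ (t + 1) ω) B).toReal with hg
  have hΦt1 : Measurable[(MeasurableSpace.comap (fun ω (i : Fin (t + 1)) => Φ (↑i + 1) ω) MeasurableSpace.pi)] fun ω => Φ (t + 1) ω := by
    have h0 : Measurable[(MeasurableSpace.comap (fun ω (i : Fin (t + 1)) => Φ (↑i + 1) ω) MeasurableSpace.pi)] fun ω (i : Fin (t + 1)) => Φ (↑i + 1) ω :=
      Measurable.of_comap_le le_rfl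
    exact (measurable_pi_apply (⟨t, Nat.lt_succ_self t⟩ : Fin (t + 1))).comp h0
  have hgm' : Measurable[(MeasurableSpace.comap (fun ω (i : Fin (t + 1)) => Φ (↑i + 1) ω) MeasurableSpace.pi)] g :=
    ((Kernel.measurable_coe κ hB).comp hΦt1).ennreal_toReal
  have hg_int : Integrable g P := by
    refine Integrable.mono' (integrable_const (1 : ℝ))
      ((hgm'.mono hm'le le_rfl).aestronglyMeasurable) (ae_of_all _ fun ω => ?_)
    rw [Real.norm_eq_abs, abs_of_nonneg ENNReal.toReal_nonneg]
    exact ENNReal.toReal_le_of_le_ofReal zero_le_one (by simp [prob_le_one])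
  have h1 : g =ᵐ[P] P[f|(MeasurableSpace.comap (fun ω (i : Fin (t + 2)) => Φ ↑i ω) MeasurableSpace.pi)] := hMarkov (t + 1) B hB
  have h2 : g =ᵐ[P] P[f|(MeasurableSpace.comap (fun ω (i : Fin (t + 1)) => Φ (↑i + 1) ω) MeasurableSpace.pi)] := by
    have ha : P[f|(MeasurableSpace.comap (fun ω (i : Fin (t + 1)) => Φ (↑i + 1) ω) MeasurableSpace.pi)] =ᵐ[P] P[P[f|(MeasurableSpace.comap (fun ω (i : Fin (t + 2)) => Φ ↑i ω) MeasurableSpace.pi)]|(MeasurableSpace.comap (fun ω (i : Fin (t + 1)) => Φ (↑i + 1) ω) MeasurableSpace.pi)] := (condExp_condExp_of_le hm'm hmle).symm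
    have hb : P[P[f|(MeasurableSpace.comap (fun ω (i : Fin (t + 2)) => Φ ↑i ω) MeasurableSpace.pi)]|(MeasurableSpace.comap (fun ω (i : Fin (t + 1)) => Φ (↑i + 1) ω) MeasurableSpace.pi)] =ᵐ[P] P[g|(MeasurableSpace.comap (fun ω (i : Fin (t + 1)) => Φ (↑i + 1) ω) MeasurableSpace.pi)] := condExp_congr_ae h1.symm
    have hc : P[g|(MeasurableSpace.comap (fun ω (i : Fin (t + 1)) => Φ (↑i + 1) ω) MeasurableSpace.pi)] = g := condExp_of_stronglyMeasurable hm'le hgm'.stronglyMeasurable hg_int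
    exact ((ha.trans hb).trans (by rw [hc])).symm
  have hseq : ∫ ω in s, f ω ∂P = ∫ ω in s, g ω ∂P := by
    have h3 := setIntegral_condExp hm'le hf_int hs
    calc ∫ ω in s, f ω ∂P = ∫ ω in s, (P[f|(MeasurableSpace.comap (fun ω (i : Fin (t + 1)) => Φ (↑i + 1) ω) MeasurableSpace.pi)]) ω ∂P := h3.symm
      _ = ∫ ω in s, g ω ∂P := integral_congr_ae (ae_restrict_of_ae h2.symm)
  have hsmeas : MeasurableSet[mΩ] s := hm'le s hs
  have hL : ∫ ω in s, f ω ∂P = (P (s ∩ Φ (t + 2) ⁻¹' B)).toReal := by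
    rw [hfeq, integral_indicator_const (1 : ℝ) hpre, smul_eq_mul, mul_one, measureReal_def,
      Measure.restrict_apply hpre, Set.inter_comm]
  have hR : ∫ ω in s, g ω ∂P = (∫⁻ ω in s, κ (Φ (t + 1) ω) B ∂P).toReal := by
    refine integral_toReal hκm.aemeasurable (ae_of_all _ fun ω => ?_)
    exact lt_of_le_of_lt prob_le_one ENNReal.one_lt_top
  have hfin1 : P (s ∩ Φ (t + 2) ⁻¹' B) ≠ ⊤ := measure_ne_top _ _
  have hfin2 : ∫⁻ ω in s, κ (Φ (t + 1) ω) B ∂P ≠ ⊤ :=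
    ne_top_of_le_ne_top (measure_ne_top P s)
      (le_trans (lintegral_mono fun ω => prob_le_one) (by simp))
  rw [hL, hR] at hseq
  exact (ENNReal.toReal_eq_toReal_iff' hfin1 hfin2).mp hseq



lemma kernel_rect_eq (κ : Kernel 𝔼 𝔼) [IsMarkovKernel κ]
    (ν' : Measure (ℕ → 𝔼)) [IsProbabilityMeasure ν']
    (πE : Set (Set 𝔼)) (hpi : IsPiSystem πE)
    (hgen : MeasurableSpace.generateFrom πE = (inferInstance : MeasurableSpace 𝔼))
    (huniv : Set.univ ∈ πE) (t : ℕ)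
    (h : ∀ A' ∈ Set.pi Set.univ '' Set.pi Set.univ (fun _ : Fin (t + 1) => πE), ∀ B ∈ πE,
      ν' ((fun p (i : Fin (t + 1)) => p ↑i) ⁻¹' A' ∩ (fun p => p (t + 1)) ⁻¹' B) =
        ∫⁻ p in (fun p (i : Fin (t + 1)) => p ↑i) ⁻¹' A', κ (p t) B ∂ν') :
    ∀ (A' : Set (Fin (t + 1) → 𝔼)), MeasurableSet A' → ∀ (B : Set 𝔼), MeasurableSet B →
      ν' ((fun p (i : Fin (t + 1)) => p ↑i) ⁻¹' A' ∩ (fun p => p (t + 1)) ⁻¹' B) =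
        ∫⁻ p in (fun p (i : Fin (t + 1)) => p ↑i) ⁻¹' A', κ (p t) B ∂ν' := by
  have hmeasπE : ∀ B ∈ πE, MeasurableSet B := by
    intro B hB
    have h0 := MeasurableSpace.measurableSet_generateFrom (s := πE) hB
    rw [hgen] at h0
    exact h0
  set coords : (ℕ → 𝔼) → (Fin (t + 1) → 𝔼) := fun p i => p ↑i with hcoords
  have hcoordsm : Measurable coords :=
    measurable_pi_lambda _ fun i => (measurable_pi_apply (i : ℕ) : Measurable fun p : ℕ → 𝔼 => p i)
  have hevalm : Measurable fun p : ℕ → 𝔼 => p (t + 1) := measurable_pi_apply _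
  set last : Fin (t + 1) := ⟨t, Nat.lt_succ_self t⟩ with hlast
  set κ' : Kernel (Fin (t + 1) → 𝔼) 𝔼 :=
    κ.comap (fun v => v last) (measurable_pi_apply last) with hκ'
  haveI : IsMarkovKernel κ' := Kernel.IsMarkovKernel.comap κ _
  set ρ1 : Measure ((Fin (t + 1) → 𝔼) × 𝔼) :=
    ν'.map (fun p => (coords p, p (t + 1))) with hρ1
  set ρ2 : Measure ((Fin (t + 1) → 𝔼) × 𝔼) := (ν'.map coords) ⊗ₘ κ' with hρ2
  have hmapm : Measurable fun p : ℕ → 𝔼 => (coords p, p (t + 1)) :=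
    hcoordsm.prodMk hevalm
  haveI : IsProbabilityMeasure (ν'.map coords) := Measure.isProbabilityMeasure_map hcoordsm.aemeasurable
  haveI : IsProbabilityMeasure ρ1 := Measure.isProbabilityMeasure_map hmapm.aemeasurable
  haveI : IsProbabilityMeasure ρ2 := by rw [hρ2]; infer_instance
  -- rectangle formulas
  have ha : ∀ (A' : Set (Fin (t + 1) → 𝔼)), MeasurableSet A' → ∀ (B : Set 𝔼), MeasurableSet B →
      ρ1 (A' ×ˢ B) = ν' (coords ⁻¹' A' ∩ (fun p => p (t + 1)) ⁻¹' B) := by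
    intro A' hA' B hB
    rw [hρ1, Measure.map_apply hmapm (hA'.prod hB), Set.mk_preimage_prod]
  have hb : ∀ (A' : Set (Fin (t + 1) → 𝔼)), MeasurableSet A' → ∀ (B : Set 𝔼), MeasurableSet B →
      ρ2 (A' ×ˢ B) = ∫⁻ p in coords ⁻¹' A', κ (p t) B ∂ν' := by
    intro A' hA' B hB
    rw [hρ2, Measure.compProd_apply_prod hA' hB, setLIntegral_map hA'
      (Kernel.measurable_coe κ' hB) hcoordsm]
    rfl
  -- the two measures agree
  have hρeq : ρ1 = ρ2 := by
    have hspanE : IsCountablySpanning πE := ⟨fun _ => Set.univ, fun _ => huniv, Set.iUnion_const _⟩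
    set πV : Set (Set (Fin (t + 1) → 𝔼)) :=
      Set.pi Set.univ '' Set.pi Set.univ (fun _ : Fin (t + 1) => πE) with hπV
    have hpiV : IsPiSystem πV := IsPiSystem.pi fun _ => hpi
    have hunivV : Set.univ ∈ πV := by
      refine ⟨fun _ => Set.univ, fun i _ => huniv, by simp⟩
    have hspanV : IsCountablySpanning πV := ⟨fun _ => Set.univ, fun _ => hunivV, Set.iUnion_const _⟩
    have hgenV : MeasurableSpace.generateFrom πV = (MeasurableSpace.pi :
        MeasurableSpace (Fin (t + 1) → 𝔼)) := by
      have h1 := generateFrom_pi_eq (fun _ : Fin (t + 1) => hspanE)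
      have h2 : (fun _ : Fin (t + 1) => MeasurableSpace.generateFrom πE) =
          (fun _ : Fin (t + 1) => (inferInstance : MeasurableSpace 𝔼)) :=
        funext fun _ => hgen
      rw [h2] at h1
      exact h1.symm
    have hgenProd : MeasurableSpace.generateFrom (Set.image2 (· ×ˢ ·) πV πE) =
        (Prod.instMeasurableSpace : MeasurableSpace ((Fin (t + 1) → 𝔼) × 𝔼)) :=
      generateFrom_eq_prod hgenV hgen hspanV hspanE
    have hpiProd : IsPiSystem (Set.image2 (· ×ˢ ·) πV πE) := by
      rintro _ ⟨s₁, hs₁, t₁, ht₁, rfl⟩ _ ⟨s₂, hs₂, t₂, ht₂, rfl⟩ hne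
      rw [Set.prod_inter_prod] at hne ⊢
      rw [Set.prod_nonempty_iff] at hne
      exact Set.mem_image2_of_mem (hpiV _ hs₁ _ hs₂ hne.1) (hpi _ ht₁ _ ht₂ hne.2)
    refine ext_of_generate_finite _ hgenProd.symm hpiProd ?_ (by simp)
    rintro _ ⟨A', hA', B, hB, rfl⟩
    have hA'm : MeasurableSet A' := by
      obtain ⟨f, hf, rfl⟩ := hA'
      exact MeasurableSet.pi Set.countable_univ fun i _ => hmeasπE _ (hf i (Set.mem_univ i))
    have hBm : MeasurableSet B := hmeasπE B hB
    rw [ha A' hA'm B hBm, hb A' hA'm B hBm]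
    exact h A' hA' B hB
  intro A' hA' B hB
  rw [← ha A' hA' B hB, hρeq, hb A' hA' B hB]



lemma chain_of_kernel_eq (κ : Kernel 𝔼 𝔼) [IsMarkovKernel κ]
    (ν' : Measure (ℕ → 𝔼)) [IsProbabilityMeasure ν']
    (h : ∀ (t : ℕ) (A' : Set (Fin (t + 1) → 𝔼)), MeasurableSet A' →
      ∀ (B : Set 𝔼), MeasurableSet B →
      ν' ((fun p (i : Fin (t + 1)) => p ↑i) ⁻¹' A' ∩ (fun p => p (t + 1)) ⁻¹' B) =
        ∫⁻ p in (fun p (i : Fin (t + 1)) => p ↑i) ⁻¹' A', κ (p t) B ∂ν') :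
    IsMarkovChainWithKernel d κ (ℕ → 𝔼) inferInstance ν' (fun t p => p t) := by
  refine ⟨fun t => measurable_pi_apply t, ?_⟩
  intro t B hB
  have hmle : MeasurableSpace.comap (fun (p : ℕ → 𝔼) (i : Fin (t + 1)) => p ↑i)
      MeasurableSpace.pi ≤ MeasurableSpace.pi :=
    Measurable.comap_le (measurable_pi_lambda _ fun i => measurable_pi_apply (↑i : ℕ))
  haveI : SigmaFinite (ν'.trim hmle) := by
    haveI := isFiniteMeasure_trim (μ := ν') hmle; infer_instance
  have hpre : MeasurableSet ((fun p : ℕ → 𝔼 => p (t + 1)) ⁻¹' B) :=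
    (measurable_pi_apply (t + 1)) hB
  have hfeq : (fun p : ℕ → 𝔼 => B.indicator (fun _ => (1 : ℝ)) (p (t + 1))) =
      ((fun p : ℕ → 𝔼 => p (t + 1)) ⁻¹' B).indicator (fun _ => (1 : ℝ)) := by
    funext p
    by_cases hp : p (t + 1) ∈ B <;>
      simp [Set.indicator_of_mem, Set.indicator_of_notMem, hp]
  have hf_int : Integrable (fun p : ℕ → 𝔼 => B.indicator (fun _ => (1 : ℝ)) (p (t + 1))) ν' := by
    rw [hfeq]; exact (integrable_const (1 : ℝ)).indicator hpre
  have hκm' : Measurable[MeasurableSpace.comap (fun (p : ℕ → 𝔼) (i : Fin (t + 1)) => p ↑i)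
      MeasurableSpace.pi] (fun p : ℕ → 𝔼 => (κ (p t) B).toReal) := by
    have h0 : Measurable[MeasurableSpace.comap (fun (p : ℕ → 𝔼) (i : Fin (t + 1)) => p ↑i)
        MeasurableSpace.pi] fun (p : ℕ → 𝔼) (i : Fin (t + 1)) => p ↑i :=
      Measurable.of_comap_le le_rfl
    have h1 := (measurable_pi_apply (⟨t, Nat.lt_succ_self t⟩ : Fin (t + 1))).comp h0
    exact ((Kernel.measurable_coe κ hB).comp h1).ennreal_toReal
  have hκm : Measurable (fun p : ℕ → 𝔼 => (κ (p t) B).toReal) :=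
    ((Kernel.measurable_coe κ hB).comp (measurable_pi_apply t)).ennreal_toReal
  refine (ae_eq_condExp_of_forall_setIntegral_eq hmle hf_int ?_ ?_ ?_)
  · intro s _ _
    refine Integrable.integrableOn (Integrable.mono' (integrable_const (1 : ℝ))
      hκm.aestronglyMeasurable (ae_of_all _ fun p => ?_))
    rw [Real.norm_eq_abs, abs_of_nonneg ENNReal.toReal_nonneg]
    exact ENNReal.toReal_le_of_le_ofReal zero_le_one (by simp [prob_le_one])
  · rintro s ⟨A', hA', rfl⟩ _
    have hA'pre : MeasurableSet ((fun p (i : Fin (t + 1)) => p ↑i) ⁻¹' A' :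
        Set (ℕ → 𝔼)) := (measurable_pi_lambda (fun (p : ℕ → 𝔼) (i : Fin (t + 1)) => p ↑i)
          (fun i => measurable_pi_apply (↑i : ℕ))) hA'
    have hL : ∫ p in (fun p (i : Fin (t + 1)) => p ↑i) ⁻¹' A',
        B.indicator (fun _ => (1 : ℝ)) (p (t + 1)) ∂ν' =
        (ν' ((fun p (i : Fin (t + 1)) => p ↑i) ⁻¹' A' ∩
          (fun p => p (t + 1)) ⁻¹' B)).toReal := by
      rw [hfeq, integral_indicator_const (1 : ℝ) hpre, smul_eq_mul, mul_one, measureReal_def,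
        Measure.restrict_apply hpre, Set.inter_comm]
    have hR : ∫ p in (fun p (i : Fin (t + 1)) => p ↑i) ⁻¹' A', (κ (p t) B).toReal ∂ν' =
        (∫⁻ p in (fun p (i : Fin (t + 1)) => p ↑i) ⁻¹' A', κ (p t) B ∂ν').toReal := by
      refine integral_toReal (((Kernel.measurable_coe κ hB).comp
        (measurable_pi_apply t)).aemeasurable) (ae_of_all _ fun p => ?_)
      exact lt_of_le_of_lt prob_le_one ENNReal.one_lt_top
    rw [hL, hR, h t A' hA' B hB]
  · exact hκm'.stronglyMeasurable.aestronglyMeasurable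


end


/-- For a Markov kernel on `ℝ^d` whose transition measures are absolutely
continuous w.r.t. Lebesgue measure, if the chain started from Lebesgue-almost every point `z`
is almost surely non-evanescent, then the chain started from every point `x` is almost surely
non-evanescent. -/
theorem nonevanescent_everywhere_of_ae (d : ℕ)
    (κ : Kernel (EuclideanSpace ℝ (Fin d)) (EuclideanSpace ℝ (Fin d)))
    (hκ : IsMarkovKernel κ)
    (hac : ∀ x, κ x ≪ (volume : Measure (EuclideanSpace ℝ (Fin d))))
    (hae : ∀ᵐ z ∂(volume : Measure (EuclideanSpace ℝ (Fin d))),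
      ∀ (Ω : Type) (mΩ : MeasurableSpace Ω) (P : Measure Ω), IsProbabilityMeasure P →
      ∀ Φ : ℕ → Ω → EuclideanSpace ℝ (Fin d), IsMarkovChainWithKernel d κ Ω mΩ P Φ →
        (∀ᵐ ω ∂P, Φ 0 ω = z) →
        P {ω | Tendsto (fun t => ‖Φ t ω‖) atTop atTop} = 0) :
    ∀ (x : EuclideanSpace ℝ (Fin d))
      (Ω : Type) (mΩ : MeasurableSpace Ω) (P : Measure Ω), IsProbabilityMeasure P →
    ∀ Φ : ℕ → Ω → EuclideanSpace ℝ (Fin d), IsMarkovChainWithKernel d κ Ω mΩ P Φ →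
      (∀ᵐ ω ∂P, Φ 0 ω = x) →
      P {ω | Tendsto (fun t => ‖Φ t ω‖) atTop atTop} = 0 := by
  intro x Ω mΩ P hP Φ hΦ _hx
  haveI := hκ
  haveI := hP
  obtain ⟨hΦm, hMarkov⟩ := hΦ
  -- the shifted trajectory
  set Y : Ω → (ℕ → (EuclideanSpace ℝ (Fin d))) := fun ω t => Φ (t + 1) ω with hYdef
  have hZm : Measurable (Φ 1) := hΦm 1
  have hYm : Measurable Y :=
    measurable_pi_lambda (fun ω t => Φ (t + 1) ω) (fun t => hΦm (t + 1))
  have hpairm : Measurable fun ω => (Φ 1 ω, Y ω) := hZm.prodMk hYm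
  set joint : Measure ((EuclideanSpace ℝ (Fin d)) × (ℕ → (EuclideanSpace ℝ (Fin d)))) := P.map (fun ω => (Φ 1 ω, Y ω)) with hjointdef
  haveI : IsProbabilityMeasure joint := Measure.isProbabilityMeasure_map hpairm.aemeasurable
  set μZ : Measure (EuclideanSpace ℝ (Fin d)) := P.map (Φ 1) with hμZdef
  haveI : IsProbabilityMeasure μZ := Measure.isProbabilityMeasure_map hZm.aemeasurable
  set ν : Kernel (EuclideanSpace ℝ (Fin d)) (ℕ → (EuclideanSpace ℝ (Fin d))) := joint.condKernel with hνdef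
  have hfst : joint.fst = μZ := by
    rw [hjointdef, hμZdef]; exact Measure.fst_map_prodMk hYm
  have hdis : μZ ⊗ₘ ν = joint := by
    rw [← hfst]
    exact joint.disintegrate joint.condKernel
  -- the law of `Φ 1` is absolutely continuous w.r.t. Lebesgue
  have hacZ : μZ ≪ (volume : Measure (EuclideanSpace ℝ (Fin d))) := by
    refine Measure.AbsolutelyContinuous.mk fun N hN hNvol => ?_
    have h0 := hMarkov 0 N hN
    have hmle : MeasurableSpace.comap (fun ω (i : Fin 1) => Φ ↑i ω)
        MeasurableSpace.pi ≤ mΩ :=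
      Measurable.comap_le (measurable_pi_lambda (fun ω (i : Fin 1) => Φ ↑i ω) (fun i => hΦm ↑i))
    haveI : SigmaFinite (P.trim hmle) := by
      haveI := isFiniteMeasure_trim (μ := P) hmle; infer_instance
    have hpre : MeasurableSet[mΩ] (Φ 1 ⁻¹' N) := hZm hN
    have hfeq : (fun ω => N.indicator (fun _ => (1 : ℝ)) (Φ 1 ω)) =
        (Φ 1 ⁻¹' N).indicator (fun _ => (1 : ℝ)) := by
      funext ω
      by_cases h : Φ 1 ω ∈ N <;>
        simp [Set.indicator_of_mem, Set.indicator_of_notMem, h]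
    have hf_int : Integrable (fun ω => N.indicator (fun _ => (1 : ℝ)) (Φ 1 ω)) P := by
      rw [hfeq]; exact (integrable_const (1 : ℝ)).indicator hpre
    have hint := integral_condExp (μ := P) hmle
      (f := fun ω => N.indicator (fun _ => (1 : ℝ)) (Φ 1 ω))
    have hzero : ∫ ω, N.indicator (fun _ => (1 : ℝ)) (Φ 1 ω) ∂P = 0 := by
      rw [← hint, integral_congr_ae h0.symm]
      have : (fun ω => (κ (Φ 0 ω) N).toReal) = fun _ => (0 : ℝ) := by
        funext ω
        rw [hac (Φ 0 ω) hNvol]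
        simp
      rw [this, integral_zero]
    rw [hfeq, integral_indicator_const (1 : ℝ) hpre, smul_eq_mul, mul_one, measureReal_def] at hzero
    have hfin : P (Φ 1 ⁻¹' N) ≠ ⊤ := measure_ne_top _ _
    have hPzero : P (Φ 1 ⁻¹' N) = 0 := by
      rcases (ENNReal.toReal_eq_zero_iff _).mp hzero with h | h
      · exact h
      · exact absurd h hfin
    rw [hμZdef, Measure.map_apply hZm hN]
    exact hPzero
  -- almost-everywhere rectangle identity for the conditional kernel
  have hone : ∀ (t : ℕ) (A' : Set (Fin (t + 1) → (EuclideanSpace ℝ (Fin d)))), MeasurableSet A' →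
      ∀ (B : Set (EuclideanSpace ℝ (Fin d))), MeasurableSet B →
      ∀ᵐ z ∂μZ,
        ν z ((fun p (i : Fin (t + 1)) => p ↑i) ⁻¹' A' ∩ (fun p => p (t + 1)) ⁻¹' B) =
          ∫⁻ p in (fun p (i : Fin (t + 1)) => p ↑i) ⁻¹' A', κ (p t) B ∂(ν z) := by
    intro t A' hA' B hB
    have hcoordsm : Measurable fun (p : ℕ → (EuclideanSpace ℝ (Fin d))) (i : Fin (t + 1)) => p ↑i :=
      measurable_pi_lambda (fun (p : ℕ → (EuclideanSpace ℝ (Fin d))) (i : Fin (t + 1)) => p ↑i)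
        (fun i => measurable_pi_apply (↑i : ℕ))
    have hcpre : MeasurableSet ((fun p (i : Fin (t + 1)) => p ↑i) ⁻¹' A' : Set (ℕ → (EuclideanSpace ℝ (Fin d)))) :=
      hcoordsm hA'
    have hepre : MeasurableSet ((fun p : ℕ → (EuclideanSpace ℝ (Fin d)) => p (t + 1)) ⁻¹' B) :=
      (measurable_pi_apply (t + 1)) hB
    have hD : MeasurableSet ((fun p (i : Fin (t + 1)) => p ↑i) ⁻¹' A' ∩
        (fun p : ℕ → (EuclideanSpace ℝ (Fin d)) => p (t + 1)) ⁻¹' B) := hcpre.inter hepre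
    have hκsnd : Measurable fun zp : (EuclideanSpace ℝ (Fin d)) × (ℕ → (EuclideanSpace ℝ (Fin d))) => κ (zp.2 t) B :=
      (Kernel.measurable_coe κ hB).comp ((measurable_pi_apply t).comp measurable_snd)
    have hmeas1 : Measurable fun z => ν z ((fun p (i : Fin (t + 1)) => p ↑i) ⁻¹' A' ∩
        (fun p : ℕ → (EuclideanSpace ℝ (Fin d)) => p (t + 1)) ⁻¹' B) := Kernel.measurable_coe ν hD
    have hmeas2 : Measurable fun z =>
        ∫⁻ p in (fun p (i : Fin (t + 1)) => p ↑i) ⁻¹' A', κ (p t) B ∂(ν z) := by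
      have heq : (fun z => ∫⁻ p in (fun p (i : Fin (t + 1)) => p ↑i) ⁻¹' A',
          κ (p t) B ∂(ν z)) = fun z => ∫⁻ p,
          ((fun p (i : Fin (t + 1)) => p ↑i) ⁻¹' A').indicator (fun p => κ (p t) B) p ∂(ν z) := by
        funext z
        rw [lintegral_indicator hcpre]
      rw [heq]
      refine Measurable.lintegral_kernel_prod_right (κ := ν) ?_
      exact (((Kernel.measurable_coe κ hB).comp (measurable_pi_apply t)).indicator
        hcpre).comp measurable_snd
    -- the σ(Φ 1, …, Φ (t+1))-measurable set corresponding to `C` and `A'`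
    refine ae_eq_of_forall_setLIntegral_eq_of_sigmaFinite hmeas1 hmeas2 fun C hC _ => ?_
    have htuplem : Measurable[MeasurableSpace.comap
        (fun ω (i : Fin (t + 1)) => Φ (↑i + 1) ω) MeasurableSpace.pi]
        fun ω (i : Fin (t + 1)) => Φ (↑i + 1) ω := Measurable.of_comap_le le_rfl
    have hsC : MeasurableSet[MeasurableSpace.comap
        (fun ω (i : Fin (t + 1)) => Φ (↑i + 1) ω) MeasurableSpace.pi] (Φ 1 ⁻¹' C) := by
      have h1 : Measurable[MeasurableSpace.comap
          (fun ω (i : Fin (t + 1)) => Φ (↑i + 1) ω) MeasurableSpace.pi]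
          fun ω => Φ 1 ω :=
        (measurable_pi_apply (⟨0, Nat.succ_pos t⟩ : Fin (t + 1))).comp htuplem
      exact h1 hC
    have hsA : MeasurableSet[MeasurableSpace.comap
        (fun ω (i : Fin (t + 1)) => Φ (↑i + 1) ω) MeasurableSpace.pi]
        ((fun ω (i : Fin (t + 1)) => Φ (↑i + 1) ω) ⁻¹' A') := htuplem hA'
    have hmark := markov_step_setLIntegral κ P Φ hΦm hMarkov t hB (hsC.inter hsA)
    -- identify the two sides
    have hYpre : Y ⁻¹' ((fun p (i : Fin (t + 1)) => p ↑i) ⁻¹' A' ∩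
        (fun p : ℕ → (EuclideanSpace ℝ (Fin d)) => p (t + 1)) ⁻¹' B) =
        (fun ω (i : Fin (t + 1)) => Φ (↑i + 1) ω) ⁻¹' A' ∩ Φ (t + 2) ⁻¹' B := rfl
    have hLHS : ∫⁻ z in C, ν z ((fun p (i : Fin (t + 1)) => p ↑i) ⁻¹' A' ∩
        (fun p : ℕ → (EuclideanSpace ℝ (Fin d)) => p (t + 1)) ⁻¹' B) ∂μZ =
        P ((Φ 1 ⁻¹' C ∩ (fun ω (i : Fin (t + 1)) => Φ (↑i + 1) ω) ⁻¹' A') ∩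
          Φ (t + 2) ⁻¹' B) := by
      rw [← Measure.compProd_apply_prod hC hD, hdis, hjointdef,
        Measure.map_apply hpairm (hC.prod hD), Set.mk_preimage_prod, hYpre,
        Set.inter_assoc]
    have hRHS : ∫⁻ z in C, (∫⁻ p in (fun p (i : Fin (t + 1)) => p ↑i) ⁻¹' A',
        κ (p t) B ∂(ν z)) ∂μZ =
        ∫⁻ ω in Φ 1 ⁻¹' C ∩ (fun ω (i : Fin (t + 1)) => Φ (↑i + 1) ω) ⁻¹' A',
          κ (Φ (t + 1) ω) B ∂P := by
      rw [← Measure.setLIntegral_compProd hκsnd hC hcpre, hdis, hjointdef,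
        setLIntegral_map (hC.prod hcpre) hκsnd hpairm, Set.mk_preimage_prod]
      rfl
    rw [hLHS, hRHS, hmark]
  -- a countable generating π-system
  obtain ⟨πE, hπcount, hπpi, hπgen, hπuniv⟩ := exists_countable_piSystem (EuclideanSpace ℝ (Fin d))
  have hπmeas : ∀ B ∈ πE, MeasurableSet B := by
    intro B hB
    have h0 := MeasurableSpace.measurableSet_generateFrom (s := πE) hB
    rw [hπgen] at h0
    exact h0
  have hall : ∀ᵐ z ∂μZ, ∀ t : ℕ,
      ∀ A' ∈ Set.pi Set.univ '' Set.pi Set.univ (fun _ : Fin (t + 1) => πE), ∀ B ∈ πE,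
      ν z ((fun p (i : Fin (t + 1)) => p ↑i) ⁻¹' A' ∩ (fun p => p (t + 1)) ⁻¹' B) =
        ∫⁻ p in (fun p (i : Fin (t + 1)) => p ↑i) ⁻¹' A', κ (p t) B ∂(ν z) := by
    rw [ae_all_iff]
    intro t
    have hπVcount : (Set.pi Set.univ '' Set.pi Set.univ (fun _ : Fin (t + 1) => πE)).Countable :=
      (Set.countable_univ_pi fun _ => hπcount).image _
    rw [ae_ball_iff hπVcount]
    intro A' hA'
    rw [ae_ball_iff hπcount]
    intro B hB
    have hA'm : MeasurableSet A' := by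
      obtain ⟨f, hf, rfl⟩ := hA'
      exact MeasurableSet.pi Set.countable_univ fun i _ => hπmeas _ (hf i (Set.mem_univ i))
    exact hone t A' hA'm B (hπmeas B hB)
  -- almost every conditional measure starts at its conditioning point
  have hstart : ∀ᵐ z ∂μZ, ν z {p : ℕ → (EuclideanSpace ℝ (Fin d)) | p 0 = z} = 1 := by
    have hD0 : MeasurableSet {zp : (EuclideanSpace ℝ (Fin d)) × (ℕ → (EuclideanSpace ℝ (Fin d))) | zp.2 0 = zp.1} :=
      measurableSet_eq_fun (by exact (measurable_pi_apply 0).comp measurable_snd)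
        measurable_fst
    have hjD0 : joint {zp : (EuclideanSpace ℝ (Fin d)) × (ℕ → (EuclideanSpace ℝ (Fin d))) | zp.2 0 = zp.1} = 1 := by
      rw [hjointdef, Measure.map_apply hpairm hD0]
      have : (fun ω => (Φ 1 ω, Y ω)) ⁻¹' {zp : (EuclideanSpace ℝ (Fin d)) × (ℕ → (EuclideanSpace ℝ (Fin d))) | zp.2 0 = zp.1} = Set.univ :=
        Set.eq_univ_of_forall fun ω => rfl
      rw [this, measure_univ]
    have hint0 : ∫⁻ z, ν z {p : ℕ → (EuclideanSpace ℝ (Fin d)) | p 0 = z} ∂μZ = 1 := by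
      rw [← hjD0, ← hdis, Measure.compProd_apply hD0]
      rfl
    have hf0m : Measurable fun z => ν z {p : ℕ → (EuclideanSpace ℝ (Fin d)) | p 0 = z} := by
      have := Kernel.measurable_kernel_prodMk_left (κ := ν) hD0
      exact this
    have hle1 : ∀ z, ν z {p : ℕ → (EuclideanSpace ℝ (Fin d)) | p 0 = z} ≤ 1 := fun z => prob_le_one
    have hsub : ∫⁻ z, (1 - ν z {p : ℕ → (EuclideanSpace ℝ (Fin d)) | p 0 = z}) ∂μZ = 0 := by
      rw [lintegral_sub hf0m (by simp [hint0]) (ae_of_all _ hle1)]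
      simp [hint0]
    have hz0 := (lintegral_eq_zero_iff (measurable_const.sub hf0m)).mp hsub
    filter_upwards [hz0] with z hz
    have : (1 : ℝ≥0∞) - ν z {p : ℕ → (EuclideanSpace ℝ (Fin d)) | p 0 = z} = 0 := hz
    exact le_antisymm (hle1 z) (tsub_eq_zero_iff_le.mp this)
  -- transfer the hypothesis to `μZ`
  have hae' := hae.filter_mono hacZ.ae_le
  -- the evanescence set
  have hS : MeasurableSet {p : ℕ → (EuclideanSpace ℝ (Fin d)) | Tendsto (fun t => ‖p t‖) atTop atTop} :=
    measurableSet_tendsto atTop fun n => (measurable_pi_apply n).norm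
  have haez : ∀ᵐ z ∂μZ, ν z {p : ℕ → (EuclideanSpace ℝ (Fin d)) | Tendsto (fun t => ‖p t‖) atTop atTop} = 0 := by
    filter_upwards [hall, hstart, hae'] with z hz1 hz2 hz3
    haveI : IsProbabilityMeasure (ν z) := inferInstance
    have hrect := fun t => kernel_rect_eq κ (ν z) πE hπpi hπgen hπuniv t (hz1 t)
    have hchain : IsMarkovChainWithKernel d κ (ℕ → (EuclideanSpace ℝ (Fin d))) inferInstance (ν z) (fun t p => p t) :=
      chain_of_kernel_eq κ (ν z) fun t A' hA' B hB => hrect t A' hA' B hB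
    have hstartz : ∀ᵐ p ∂(ν z), p 0 = z := by
      have hmeasz : MeasurableSet {p : ℕ → (EuclideanSpace ℝ (Fin d)) | p 0 = z} := by
        have heq : {p : ℕ → (EuclideanSpace ℝ (Fin d)) | p 0 = z} =
            (fun p : ℕ → (EuclideanSpace ℝ (Fin d)) => p 0) ⁻¹' {z} := rfl
        rw [heq]
        exact (measurable_pi_apply 0) (measurableSet_singleton z)
      have hcompl : ν z {p : ℕ → (EuclideanSpace ℝ (Fin d)) | p 0 = z}ᶜ = 0 :=
        (prob_compl_eq_zero_iff hmeasz).mpr hz2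
      exact hcompl
    exact hz3 (ℕ → (EuclideanSpace ℝ (Fin d))) inferInstance (ν z) inferInstance (fun t p => p t) hchain hstartz
  -- conclusion
  have hevent : {ω | Tendsto (fun t => ‖Φ t ω‖) atTop atTop} =
      Y ⁻¹' {p : ℕ → (EuclideanSpace ℝ (Fin d)) | Tendsto (fun t => ‖p t‖) atTop atTop} := by
    ext ω
    exact (tendsto_add_atTop_iff_nat (f := fun t => ‖Φ t ω‖) 1).symm
  rw [hevent]
  have hPY : P (Y ⁻¹' {p : ℕ → (EuclideanSpace ℝ (Fin d)) | Tendsto (fun t => ‖p t‖) atTop atTop}) =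
      ∫⁻ z, ν z {p : ℕ → (EuclideanSpace ℝ (Fin d)) | Tendsto (fun t => ‖p t‖) atTop atTop} ∂μZ := by
    have h1 : Y ⁻¹' {p : ℕ → (EuclideanSpace ℝ (Fin d)) | Tendsto (fun t => ‖p t‖) atTop atTop} =
        (fun ω => (Φ 1 ω, Y ω)) ⁻¹'
          (Set.univ ×ˢ {p : ℕ → (EuclideanSpace ℝ (Fin d)) | Tendsto (fun t => ‖p t‖) atTop atTop}) := by
      rw [Set.mk_preimage_prod, Set.preimage_univ, Set.univ_inter]
    rw [h1, ← Measure.map_apply hpairm (MeasurableSet.univ.prod hS), ← hjointdef, ← hdis,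
      Measure.compProd_apply_prod MeasurableSet.univ hS, Measure.restrict_univ]
  rw [hPY, lintegral_congr_ae haez, lintegral_zero]
end

section
/- Fix N ≥ 1, a vector A^max ∈ ℝ^N with A^max_i > 0 for all i, constants 0 < δ_* ≤ δ^*, and a probability density f on ℝ^N that vanishes outside the rectangle [0, A^max] and satisfies δ_* ≤ f ≤ δ^* a.e. on [0, A^max]. Let W ⊆ ℝ^N be a linear subspace with dim W = m ≥ 1, let π_W be the orthogonal projection onto W, and let Leb_W denote Lebesgue measure on W. Let A be a random vector with density f and let c ∈ ℝ^N be fixed. Then the law of π_W(A + c) on W is absolutely continuous with respect to Leb_W with a density g such that: (i) g ≤ C a.e., for a constant C depending only on δ^*, A^max and N (not on c or W); and (ii) there exist ε > 0 and c_* > 0, depending only on δ_*, A^max, N and W, such that g ≥ c_* a.e. on the ball {w ∈ W : ‖w − π_W(c + A^max/2)‖ ≤ ε}. -/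
open MeasureTheory
open scoped ENNReal

section AuxCopy

lemma aux_map_withDensity {α β : Type*} [MeasurableSpace α] [MeasurableSpace β]
    {μ : Measure α} {ν : Measure β} (T : α ≃ᵐ β) (hT : MeasurePreserving T μ ν)
    (f : α → ℝ≥0∞) :
    Measure.map T (μ.withDensity f) = ν.withDensity (fun y => f (T.symm y)) := by
  ext s hs
  rw [Measure.map_apply T.measurable hs, withDensity_apply _ (T.measurable hs),
    withDensity_apply _ hs]
  have h := hT.setLIntegral_comp_preimage_emb T.measurableEmbedding
      (fun y => f (T.symm y)) s
  simpa using h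

lemma aux_map_fst {α β : Type*} [MeasurableSpace α] [MeasurableSpace β]
    (μ : Measure α) (ν : Measure β) [SigmaFinite μ] [SigmaFinite ν]
    {h : α × β → ℝ≥0∞} (hh : Measurable h) :
    Measure.map Prod.fst ((μ.prod ν).withDensity h) =
      μ.withDensity (fun u => ∫⁻ w, h (u, w) ∂ν) := by
  ext s hs
  rw [Measure.map_apply measurable_fst hs, withDensity_apply _ (measurable_fst hs),
    withDensity_apply _ hs]
  have hps : Prod.fst ⁻¹' s = s ×ˢ (Set.univ : Set β) := (Set.prod_univ).symm
  rw [hps, ← Measure.prod_restrict, lintegral_prod _ hh.aemeasurable]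
  simp

lemma aux_abs_coord_le {n : ℕ} (x : EuclideanSpace ℝ (Fin n)) (i : Fin n) :
    |x i| ≤ ‖x‖ := by
  rw [EuclideanSpace.norm_eq]
  have h1 : |x i| = Real.sqrt (‖x i‖ ^ 2) := by
    rw [Real.sqrt_sq_eq_abs, abs_norm, Real.norm_eq_abs]
  rw [h1]
  apply Real.sqrt_le_sqrt
  exact Finset.single_le_sum (f := fun j => ‖x j‖ ^ 2) (fun j _ => sq_nonneg _)
    (Finset.mem_univ i)

lemma aux_norm_le_norm {n : ℕ} (x y : EuclideanSpace ℝ (Fin n))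
    (h : ∀ i, |x i| ≤ |y i|) : ‖x‖ ≤ ‖y‖ := by
  rw [EuclideanSpace.norm_eq, EuclideanSpace.norm_eq]
  apply Real.sqrt_le_sqrt
  apply Finset.sum_le_sum
  intro i _
  rw [Real.norm_eq_abs, Real.norm_eq_abs]
  exact pow_le_pow_left₀ (abs_nonneg _) (h i) 2

lemma aux_le_of_sq_le_sq {a b : ℝ} (hb : 0 ≤ b) (h : a ^ 2 ≤ b ^ 2) (ha : 0 ≤ a) :
    a ≤ b := by
  nlinarith

end AuxCopy

set_option maxHeartbeats 2000000 in
/-- The orthogonal projection onto an `m`-dimensional subspace `W` of the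
(shifted) arrival vector `A + c`, where `A` has a density between `δ_*` and `δ^*` on the
rectangle `[0, A^max]`, has (read through any linear isometry `e : W ≃ ℝ^m`) a density `g`
w.r.t. Lebesgue measure which is bounded above by a constant depending only on
`δ^*, A^max, N`, and bounded below by a positive constant (depending only on
`δ_*, A^max, N, W`) on a ball around the projection of `c + A^max/2`. -/
theorem projected_arrival_density (N : ℕ)
    (Amax : EuclideanSpace ℝ (Fin N)) (hA : ∀ i, 0 < Amax i)
    (δlow δhigh : ℝ) (hδ0 : 0 < δlow) (hδ : δlow ≤ δhigh)
    (f : EuclideanSpace ℝ (Fin N) → ℝ≥0∞) (hf : Measurable f)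
    (hsupp : ∀ x : EuclideanSpace ℝ (Fin N), ¬(∀ i, 0 ≤ x i ∧ x i ≤ Amax i) → f x = 0)
    (hbound : ∀ᵐ x ∂(volume : Measure (EuclideanSpace ℝ (Fin N))),
      (∀ i, 0 ≤ x i ∧ x i ≤ Amax i) →
        ENNReal.ofReal δlow ≤ f x ∧ f x ≤ ENNReal.ofReal δhigh)
    (hprob : ∫⁻ x, f x ∂(volume : Measure (EuclideanSpace ℝ (Fin N))) = 1)
    (m : ℕ) (hm : 1 ≤ m) :
    ∃ Cb : ℝ, 0 < Cb ∧
      ∀ W : Submodule ℝ (EuclideanSpace ℝ (Fin N)), Module.finrank ℝ W = m →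
        ∃ ε > (0 : ℝ), ∃ cstar > (0 : ℝ),
          ∀ (c : EuclideanSpace ℝ (Fin N)) (e : W ≃ₗᵢ[ℝ] EuclideanSpace ℝ (Fin m))
            (Ω : Type) (mΩ : MeasurableSpace Ω) (P : Measure Ω),
            IsProbabilityMeasure P →
            ∀ A : Ω → EuclideanSpace ℝ (Fin N), Measurable A →
              Measure.map A P = volume.withDensity f →
              ∃ g : EuclideanSpace ℝ (Fin m) → ℝ≥0∞, Measurable g ∧
                Measure.map (fun ω => e (W.orthogonalProjectionOnto (A ω + c))) P =
                  volume.withDensity g ∧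
                (∀ᵐ v ∂(volume : Measure (EuclideanSpace ℝ (Fin m))),
                  g v ≤ ENNReal.ofReal Cb) ∧
                (∀ᵐ v ∂(volume : Measure (EuclideanSpace ℝ (Fin m))),
                  v ∈ Metric.closedBall
                      (e (W.orthogonalProjectionOnto (c + (1 / 2 : ℝ) • Amax))) ε →
                    ENNReal.ofReal cstar ≤ g v) := by
  classical
  have hδh : 0 < δhigh := lt_of_lt_of_le hδ0 hδ
  set κρ : ℝ≥0∞ :=
    volume (Metric.closedBall (0 : EuclideanSpace ℝ (Fin (N - m))) ‖Amax‖) with hκρ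
  have hκρ_fin : κρ < ⊤ := measure_closedBall_lt_top
  refine ⟨δhigh * κρ.toReal + 1, by nlinarith [ENNReal.toReal_nonneg (a := κρ)], ?_⟩
  intro W hW
  -- dimensions
  have hNm : m ≤ N := by
    have h1 : Module.finrank ℝ W ≤ Module.finrank ℝ (EuclideanSpace ℝ (Fin N)) :=
      W.finrank_le
    rwa [hW, finrank_euclideanSpace_fin] at h1
  have hNpos : 0 < N := lt_of_lt_of_le hm hNm
  haveI : Nonempty (Fin N) := ⟨⟨0, hNpos⟩⟩
  -- radius of the inscribed ball
  set r : ℝ := (Finset.univ.inf' Finset.univ_nonempty fun i => Amax i) / 2 with hr_def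
  have hrpos : 0 < r := by
    have h2 : 0 < Finset.univ.inf' Finset.univ_nonempty fun i : Fin N => Amax i := by
      rw [Finset.lt_inf'_iff]
      exact fun i _ => hA i
    simpa [hr_def] using half_pos h2
  have hrle : ∀ i, r ≤ Amax i / 2 := by
    intro i
    have h2 : (Finset.univ.inf' Finset.univ_nonempty fun i : Fin N => Amax i) ≤ Amax i :=
      Finset.inf'_le _ (Finset.mem_univ i)
    simp only [hr_def]
    linarith
  set κ : ℝ≥0∞ :=
    volume (Metric.closedBall (0 : EuclideanSpace ℝ (Fin (N - m))) (r / 2)) with hκ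
  have hκpos : 0 < κ := Metric.measure_closedBall_pos _ _ (by positivity)
  have hκfin : κ < ⊤ := measure_closedBall_lt_top
  refine ⟨r / 2, by positivity, δlow * κ.toReal, ?_, ?_⟩
  · exact mul_pos hδ0 (ENNReal.toReal_pos hκpos.ne' hκfin.ne)
  intro c e Ω mΩ P hP A hAmeas hAmap
  -- adapted orthonormal basis
  have hKrank : Module.finrank ℝ (Wᗮ : Submodule ℝ (EuclideanSpace ℝ (Fin N))) = N - m := by
    have h3 := Submodule.finrank_add_finrank_orthogonal (K := W)
    rw [hW, finrank_euclideanSpace_fin] at h3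
    omega
  set bW : OrthonormalBasis (Fin m) ℝ W :=
    (EuclideanSpace.basisFun (Fin m) ℝ).map e.symm with hbW
  set bK : OrthonormalBasis (Fin (N - m)) ℝ (Wᗮ : Submodule ℝ (EuclideanSpace ℝ (Fin N))) :=
    (stdOrthonormalBasis ℝ (Wᗮ : Submodule ℝ (EuclideanSpace ℝ (Fin N)))).reindex
      (finCongr hKrank) with hbK
  set v : Fin m ⊕ Fin (N - m) → EuclideanSpace ℝ (Fin N) :=
    Sum.elim (fun j => (bW j : EuclideanSpace ℝ (Fin N)))
      (fun j => (bK j : EuclideanSpace ℝ (Fin N))) with hv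
  have hon : Orthonormal ℝ v := by
    rw [orthonormal_iff_ite]
    have hbWo := bW.orthonormal
    have hbKo := bK.orthonormal
    rw [orthonormal_iff_ite] at hbWo hbKo
    rintro (j | j) (j' | j')
    · simpa [hv, ← Submodule.coe_inner] using hbWo j j'
    · simp only [hv, Sum.elim_inl, Sum.elim_inr, reduceIte]
      exact Submodule.inner_right_of_mem_orthogonal (SetLike.coe_mem _) (SetLike.coe_mem _)
    · simp only [hv, Sum.elim_inl, Sum.elim_inr, reduceIte]
      exact Submodule.inner_left_of_mem_orthogonal (SetLike.coe_mem _) (SetLike.coe_mem _)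
    · simpa [hv, ← Submodule.coe_inner] using hbKo j j'
  have hsp : ⊤ ≤ Submodule.span ℝ (Set.range v) := by
    rw [hv, Set.Sum.elim_range, Submodule.span_union]
    have h1 : Submodule.span ℝ (Set.range fun j => (bW j : EuclideanSpace ℝ (Fin N))) = W := by
      have h0 : (fun j => (bW j : EuclideanSpace ℝ (Fin N))) = W.subtype ∘ ⇑bW := rfl
      rw [h0, Set.range_comp, Submodule.span_image]
      rw [← bW.coe_toBasis, Module.Basis.span_eq, Submodule.map_subtype_top]
    have h2 : Submodule.span ℝ (Set.range fun j => (bK j : EuclideanSpace ℝ (Fin N))) = Wᗮ := by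
      have h0 : (fun j => (bK j : EuclideanSpace ℝ (Fin N))) = Wᗮ.subtype ∘ ⇑bK := rfl
      rw [h0, Set.range_comp, Submodule.span_image]
      rw [← bK.coe_toBasis, Module.Basis.span_eq, Submodule.map_subtype_top]
    rw [h1, h2, Submodule.sup_orthogonal_of_hasOrthogonalProjection]
  set B : OrthonormalBasis (Fin m ⊕ Fin (N - m)) ℝ (EuclideanSpace ℝ (Fin N)) :=
    OrthonormalBasis.mk hon hsp with hB
  have hBcoe : ⇑B = v := OrthonormalBasis.coe_mk hon hsp
  have hB1 : ∀ (x : EuclideanSpace ℝ (Fin N)) (j : Fin m),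
      B.repr x (Sum.inl j) = e (W.orthogonalProjectionOnto x) j := by
    intro x j
    rw [B.repr_apply_apply, hBcoe]
    show (inner ℝ ((bW j : EuclideanSpace ℝ (Fin N))) x : ℝ) = _
    have h0 : (inner ℝ ((bW j : EuclideanSpace ℝ (Fin N)))
        (x - W.orthogonalProjectionOnto x) : ℝ) = 0 :=
      Submodule.inner_right_of_mem_orthogonal (SetLike.coe_mem _)
        (Submodule.sub_starProjection_mem_orthogonal (K := _) x)
    rw [inner_sub_right] at h0
    have h1 : (inner ℝ ((bW j : EuclideanSpace ℝ (Fin N))) x : ℝ)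
        = inner ℝ ((bW j : EuclideanSpace ℝ (Fin N)))
            ((W.orthogonalProjectionOnto x : EuclideanSpace ℝ (Fin N))) := by linarith
    rw [h1, ← Submodule.coe_inner]
    have h2 : bW j = e.symm (EuclideanSpace.single j 1) := by
      simp [hbW, OrthonormalBasis.map_apply, EuclideanSpace.basisFun_apply]
    rw [h2]
    have h3 : (inner ℝ (e.symm (EuclideanSpace.single j (1:ℝ)))
          (W.orthogonalProjectionOnto x) : ℝ)
        = inner ℝ (EuclideanSpace.single j (1:ℝ)) (e (W.orthogonalProjectionOnto x)) := by
      rw [← LinearIsometryEquiv.inner_map_map e]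
      simp
    rw [h3, EuclideanSpace.inner_single_left]
    simp
  have hB2 : ∀ (x : EuclideanSpace ℝ (Fin N)) (j : Fin (N - m)),
      B.repr x (Sum.inr j) = bK.repr (Wᗮ.orthogonalProjectionOnto x) j := by
    intro x j
    rw [B.repr_apply_apply, hBcoe]
    show (inner ℝ ((bK j : EuclideanSpace ℝ (Fin N))) x : ℝ) = _
    have h0 : (inner ℝ ((bK j : EuclideanSpace ℝ (Fin N)))
        (x - Wᗮ.orthogonalProjectionOnto x) : ℝ) = 0 :=
      Submodule.inner_right_of_mem_orthogonal (SetLike.coe_mem _)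
        (Submodule.sub_starProjection_mem_orthogonal (K := _) x)
    rw [inner_sub_right] at h0
    have h1 : (inner ℝ ((bK j : EuclideanSpace ℝ (Fin N))) x : ℝ)
        = inner ℝ ((bK j : EuclideanSpace ℝ (Fin N)))
            ((Wᗮ.orthogonalProjectionOnto x : EuclideanSpace ℝ (Fin N))) := by linarith
    rw [h1, ← Submodule.coe_inner, ← bK.repr_apply_apply]
  -- the measurable equivalence
  set Ξ : EuclideanSpace ℝ (Fin N) ≃ᵐ
      (EuclideanSpace ℝ (Fin m) × EuclideanSpace ℝ (Fin (N - m))) :=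
    B.measurableEquiv.trans (((MeasurableEquiv.toLp 2 (Fin m ⊕ Fin (N - m) → ℝ)).symm).trans
      ((MeasurableEquiv.sumPiEquivProdPi (fun _ => ℝ)).trans
        (MeasurableEquiv.prodCongr (MeasurableEquiv.toLp 2 (Fin m → ℝ)).symm.symm
          (MeasurableEquiv.toLp 2 (Fin (N - m) → ℝ)).symm.symm))) with hΞ
  have hΞapp : ∀ x : EuclideanSpace ℝ (Fin N),
      Ξ x = (e (W.orthogonalProjectionOnto x), bK.repr (Wᗮ.orthogonalProjectionOnto x)) := by
    intro x
    have h1 : (Ξ x).1 = e (W.orthogonalProjectionOnto x) := by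
      ext j
      exact hB1 x j
    have h2 : (Ξ x).2 = bK.repr (Wᗮ.orthogonalProjectionOnto x) := by
      ext j
      exact hB2 x j
    exact Prod.ext h1 h2
  have hΞp : MeasurePreserving Ξ (volume : Measure (EuclideanSpace ℝ (Fin N)))
      ((volume : Measure (EuclideanSpace ℝ (Fin m))).prod
        (volume : Measure (EuclideanSpace ℝ (Fin (N - m))))) := by
    have h1 := B.measurePreserving_measurableEquiv
    have h2 := EuclideanSpace.volume_preserving_symm_measurableEquiv_toLp (Fin m ⊕ Fin (N - m))
    have h3 := measurePreserving_sumPiEquivProdPi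
      (fun _ : Fin m ⊕ Fin (N - m) => (volume : Measure ℝ))
    have h4m := (EuclideanSpace.volume_preserving_symm_measurableEquiv_toLp (Fin m)).symm
      (MeasurableEquiv.toLp 2 (Fin m → ℝ)).symm
    have h4k := (EuclideanSpace.volume_preserving_symm_measurableEquiv_toLp (Fin (N - m))).symm
      (MeasurableEquiv.toLp 2 (Fin (N - m) → ℝ)).symm
    exact ((h4m.prod h4k).comp (h3.comp (h2.comp h1)))
  have hsplit : ∀ x z : EuclideanSpace ℝ (Fin N),
      ‖x - z‖ ^ 2 = ‖(Ξ x).1 - (Ξ z).1‖ ^ 2 + ‖(Ξ x).2 - (Ξ z).2‖ ^ 2 := by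
    intro x z
    have h1x : (Ξ x).1 = e (W.orthogonalProjectionOnto x) := by rw [hΞapp]
    have h1z : (Ξ z).1 = e (W.orthogonalProjectionOnto z) := by rw [hΞapp]
    have h2x : (Ξ x).2 = bK.repr (Wᗮ.orthogonalProjectionOnto x) := by rw [hΞapp]
    have h2z : (Ξ z).2 = bK.repr (Wᗮ.orthogonalProjectionOnto z) := by rw [hΞapp]
    rw [h1x, h1z, h2x, h2z, ← map_sub e, ← map_sub (W.orthogonalProjectionOnto),
      ← map_sub bK.repr, ← map_sub (Wᗮ.orthogonalProjectionOnto),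
      LinearIsometryEquiv.norm_map, LinearIsometryEquiv.norm_map]
    exact Submodule.norm_sq_eq_add_norm_sq_projection (x - z) W
  -- the density
  set g : EuclideanSpace ℝ (Fin m) → ℝ≥0∞ :=
    fun u => ∫⁻ w, f (Ξ.symm (u, w) + -c)
      ∂(volume : Measure (EuclideanSpace ℝ (Fin (N - m)))) with hg
  have hF2meas : Measurable (fun p : EuclideanSpace ℝ (Fin m) × EuclideanSpace ℝ (Fin (N - m)) =>
      f (Ξ.symm p + -c)) := hf.comp (Ξ.symm.measurable.add_const (-c))
  have hgmeas : Measurable g := hF2meas.lintegral_prod_right'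
  -- the pushforward identity
  have hTp : MeasurePreserving (MeasurableEquiv.addRight c)
      (volume : Measure (EuclideanSpace ℝ (Fin N))) volume := by
    have h5 := measurePreserving_add_right (volume : Measure (EuclideanSpace ℝ (Fin N))) c
    simpa [MeasurableEquiv.coe_addRight] using h5
  have hmapped : Measure.map (fun ω => (e (W.orthogonalProjectionOnto (A ω + c)) :
      EuclideanSpace ℝ (Fin m))) P = volume.withDensity g := by
    have hfun : (fun ω => (e (W.orthogonalProjectionOnto (A ω + c)) : EuclideanSpace ℝ (Fin m)))
        = (Prod.fst ∘ ⇑Ξ) ∘ ((fun x => x + c) ∘ A) := by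
      funext ω
      simp only [Function.comp_apply]
      rw [hΞapp]
    rw [hfun]
    rw [← Measure.map_map (measurable_fst.comp Ξ.measurable)
      ((measurable_add_const c).comp hAmeas)]
    rw [← Measure.map_map (measurable_add_const c) hAmeas, hAmap]
    rw [← Measure.map_map measurable_fst Ξ.measurable]
    have step1 := aux_map_withDensity (MeasurableEquiv.addRight c) hTp f
    simp only [MeasurableEquiv.symm_addRight, MeasurableEquiv.coe_addRight] at step1
    rw [step1]
    have step2 := aux_map_withDensity Ξ hΞp (fun y => f (y + -c))
    rw [step2]
    exact aux_map_fst volume volume hF2meas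
  have hΘp : MeasurePreserving
      (fun p : EuclideanSpace ℝ (Fin m) × EuclideanSpace ℝ (Fin (N - m)) => Ξ.symm p + -c)
      ((volume : Measure (EuclideanSpace ℝ (Fin m))).prod
        (volume : Measure (EuclideanSpace ℝ (Fin (N - m)))))
      (volume : Measure (EuclideanSpace ℝ (Fin N))) := by
    have h5 := measurePreserving_add_right (volume : Measure (EuclideanSpace ℝ (Fin N))) (-c)
    exact h5.comp (MeasurePreserving.symm Ξ hΞp)
  -- geometry of the rectangle
  have hR_sub_ball : ∀ y : EuclideanSpace ℝ (Fin N), (∀ i, 0 ≤ y i ∧ y i ≤ Amax i) →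
      y ∈ Metric.closedBall ((1/2 : ℝ) • Amax) ‖Amax‖ := by
    intro y hy
    rw [Metric.mem_closedBall, dist_eq_norm]
    apply aux_norm_le_norm
    intro i
    have h6 : (y - (1/2 : ℝ) • Amax) i = y i - (1/2) * Amax i := by
      simp [PiLp.sub_apply, PiLp.smul_apply]
    rw [h6, abs_of_pos (hA i)]
    obtain ⟨h7, h8⟩ := hy i
    rw [abs_le]
    constructor <;> linarith [le_of_lt (hA i)]
  have hball_sub_R : ∀ y : EuclideanSpace ℝ (Fin N),
      y ∈ Metric.closedBall ((1/2 : ℝ) • Amax) r → (∀ i, 0 ≤ y i ∧ y i ≤ Amax i) := by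
    intro y hy i
    rw [Metric.mem_closedBall, dist_eq_norm] at hy
    have h6 := aux_abs_coord_le (y - (1/2 : ℝ) • Amax) i
    have h7 : (y - (1/2 : ℝ) • Amax) i = y i - (1/2) * Amax i := by
      simp [PiLp.sub_apply, PiLp.smul_apply]
    rw [h7] at h6
    have h8 := le_trans h6 hy
    rw [abs_le] at h8
    have h9 := hrle i
    constructor <;> linarith
  refine ⟨g, hgmeas, hmapped, ?_, ?_⟩
  · -- upper bound
    have hfa : ∀ᵐ y ∂(volume : Measure (EuclideanSpace ℝ (Fin N))),
        f y ≤ ENNReal.ofReal δhigh *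
          (Metric.closedBall ((1/2 : ℝ) • Amax) ‖Amax‖).indicator 1 y := by
      filter_upwards [hbound] with y hy
      by_cases hyR : ∀ i, 0 ≤ y i ∧ y i ≤ Amax i
      · rw [Set.indicator_of_mem (hR_sub_ball y hyR)]
        simpa using (hy hyR).2
      · rw [hsupp y hyR]
        exact zero_le
    have h' : ∀ᵐ y ∂(Measure.map
        (fun p : EuclideanSpace ℝ (Fin m) × EuclideanSpace ℝ (Fin (N - m)) => Ξ.symm p + -c)
        ((volume : Measure (EuclideanSpace ℝ (Fin m))).prod volume)),
        f y ≤ ENNReal.ofReal δhigh *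
          (Metric.closedBall ((1/2 : ℝ) • Amax) ‖Amax‖).indicator 1 y := by
      rw [hΘp.map_eq]
      exact hfa
    have hae2 := ae_of_ae_map hΘp.measurable.aemeasurable h'
    have hae3 := Measure.ae_ae_of_ae_prod hae2
    filter_upwards [hae3] with u hu
    have hw₁ : ∀ w, (Ξ.symm (u, w) + -c) ∈ Metric.closedBall ((1/2 : ℝ) • Amax) ‖Amax‖ →
        w ∈ Metric.closedBall (Ξ ((1/2 : ℝ) • Amax + c)).2 ‖Amax‖ := by
      intro w hmem
      rw [Metric.mem_closedBall, dist_eq_norm] at hmem ⊢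
      have h5 : Ξ.symm (u, w) + -c - (1/2 : ℝ) • Amax
          = Ξ.symm (u, w) - ((1/2 : ℝ) • Amax + c) := by abel
      rw [h5] at hmem
      have h6 := hsplit (Ξ.symm (u, w)) ((1/2 : ℝ) • Amax + c)
      have h7 : Ξ (Ξ.symm (u, w)) = (u, w) := Ξ.apply_symm_apply (u, w)
      rw [h7] at h6
      apply aux_le_of_sq_le_sq (norm_nonneg _) _ (norm_nonneg _)
      calc ‖w - (Ξ ((1/2 : ℝ) • Amax + c)).2‖ ^ 2
          ≤ ‖Ξ.symm (u, w) - ((1/2 : ℝ) • Amax + c)‖ ^ 2 := by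
            rw [h6]; nlinarith [sq_nonneg ‖u - (Ξ ((1/2 : ℝ) • Amax + c)).1‖]
        _ ≤ ‖Amax‖ ^ 2 := by
            apply pow_le_pow_left₀ (norm_nonneg _) hmem 2
    calc g u = ∫⁻ w, f (Ξ.symm (u, w) + -c) ∂volume := rfl
      _ ≤ ∫⁻ w, ENNReal.ofReal δhigh *
            (Metric.closedBall ((1/2 : ℝ) • Amax) ‖Amax‖).indicator 1 (Ξ.symm (u, w) + -c)
            ∂volume := lintegral_mono_ae hu
      _ ≤ ∫⁻ w, ENNReal.ofReal δhigh *
            (Metric.closedBall (Ξ ((1/2 : ℝ) • Amax + c)).2 ‖Amax‖).indicator 1 w ∂volume := by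
          apply lintegral_mono
          intro w
          apply mul_le_mul_right
          by_cases hmem : (Ξ.symm (u, w) + -c) ∈ Metric.closedBall ((1/2 : ℝ) • Amax) ‖Amax‖
          · rw [Set.indicator_of_mem hmem, Set.indicator_of_mem (hw₁ w hmem)]
            simp
          · rw [Set.indicator_of_notMem hmem]
            exact zero_le
      _ = ENNReal.ofReal δhigh *
            volume (Metric.closedBall (Ξ ((1/2 : ℝ) • Amax + c)).2 ‖Amax‖) := by
          have hind : Measurable ((Metric.closedBall (Ξ ((1/2 : ℝ) • Amax + c)).2
              ‖Amax‖).indicator (1 : EuclideanSpace ℝ (Fin (N - m)) → ℝ≥0∞)) :=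
            measurable_one.indicator measurableSet_closedBall
          rw [lintegral_const_mul _ hind, lintegral_indicator_one measurableSet_closedBall]
      _ = ENNReal.ofReal δhigh * κρ := by
          rw [Measure.addHaar_closedBall_center volume, ← hκρ]
      _ ≤ ENNReal.ofReal (δhigh * κρ.toReal + 1) := by
          rw [← ENNReal.ofReal_toReal hκρ_fin.ne, ← ENNReal.ofReal_mul hδh.le]
          rw [ENNReal.ofReal_toReal hκρ_fin.ne]
          apply ENNReal.ofReal_le_ofReal
          nlinarith [ENNReal.toReal_nonneg (a := κρ)]
  · -- lower bound
    have hfl : ∀ᵐ y ∂(volume : Measure (EuclideanSpace ℝ (Fin N))),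
        y ∈ Metric.closedBall ((1/2 : ℝ) • Amax) r → ENNReal.ofReal δlow ≤ f y := by
      filter_upwards [hbound] with y hy hmem
      exact (hy (hball_sub_R y hmem)).1
    have h' : ∀ᵐ y ∂(Measure.map
        (fun p : EuclideanSpace ℝ (Fin m) × EuclideanSpace ℝ (Fin (N - m)) => Ξ.symm p + -c)
        ((volume : Measure (EuclideanSpace ℝ (Fin m))).prod volume)),
        y ∈ Metric.closedBall ((1/2 : ℝ) • Amax) r → ENNReal.ofReal δlow ≤ f y := by
      rw [hΘp.map_eq]
      exact hfl
    have hae2 := ae_of_ae_map hΘp.measurable.aemeasurable h'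
    have hae3 := Measure.ae_ae_of_ae_prod hae2
    filter_upwards [hae3] with u hu humem
    have hcenter : (Ξ ((1/2 : ℝ) • Amax + c)).1
        = e (W.orthogonalProjectionOnto (c + (1/2 : ℝ) • Amax)) := by
      rw [hΞapp, add_comm]
    have humem' : ‖u - (Ξ ((1/2 : ℝ) • Amax + c)).1‖ ≤ r / 2 := by
      rw [hcenter]
      rw [Metric.mem_closedBall, dist_eq_norm] at humem
      exact humem
    have hgeom : ∀ w, w ∈ Metric.closedBall (Ξ ((1/2 : ℝ) • Amax + c)).2 (r / 2) →
        Ξ.symm (u, w) + -c ∈ Metric.closedBall ((1/2 : ℝ) • Amax) r := by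
      intro w hw
      rw [Metric.mem_closedBall, dist_eq_norm] at hw ⊢
      have h5 : Ξ.symm (u, w) + -c - (1/2 : ℝ) • Amax
          = Ξ.symm (u, w) - ((1/2 : ℝ) • Amax + c) := by abel
      rw [h5]
      have h6 := hsplit (Ξ.symm (u, w)) ((1/2 : ℝ) • Amax + c)
      have h7 : Ξ (Ξ.symm (u, w)) = (u, w) := Ξ.apply_symm_apply (u, w)
      rw [h7] at h6
      apply aux_le_of_sq_le_sq hrpos.le _ (norm_nonneg _)
      rw [h6]
      have h8 : ‖u - (Ξ ((1/2 : ℝ) • Amax + c)).1‖ ^ 2 ≤ (r / 2) ^ 2 :=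
        pow_le_pow_left₀ (norm_nonneg _) humem' 2
      have h9 : ‖w - (Ξ ((1/2 : ℝ) • Amax + c)).2‖ ^ 2 ≤ (r / 2) ^ 2 :=
        pow_le_pow_left₀ (norm_nonneg _) hw 2
      nlinarith
    have hSvol : volume (Metric.closedBall (Ξ ((1/2 : ℝ) • Amax + c)).2 (r / 2)) = κ := by
      rw [Measure.addHaar_closedBall_center volume, ← hκ]
    calc ENNReal.ofReal (δlow * κ.toReal)
        = ENNReal.ofReal δlow * κ := by
          rw [ENNReal.ofReal_mul hδ0.le, ENNReal.ofReal_toReal hκfin.ne]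
      _ = ∫⁻ w in Metric.closedBall (Ξ ((1/2 : ℝ) • Amax + c)).2 (r / 2),
            ENNReal.ofReal δlow ∂volume := by
          rw [setLIntegral_const, hSvol]
      _ ≤ ∫⁻ w in Metric.closedBall (Ξ ((1/2 : ℝ) • Amax + c)).2 (r / 2),
            f (Ξ.symm (u, w) + -c) ∂volume := by
          apply lintegral_mono_ae
          rw [ae_restrict_iff' measurableSet_closedBall]
          filter_upwards [hu] with w hw hwS
          exact hw (hgeom w hwS)
      _ ≤ g u := setLIntegral_le_lintegral _ _
end

section
/- Let κ be a Markov probability kernel on ℝ^d for which there exist ε > 0 and c_* > 0 such that for every x ∈ ℝ^d and every Borel set A: κ(x, A) ≥ c_* · Leb(A ∩ B_ε(x)), where B_ε(x) is the closed ball of radius ε around x. Then for every compact set G ⊆ ℝ^d there exist an integer m ≥ 1, a constant c > 0, a point z ∈ ℝ^d and a radius r > 0 such that the m-step kernel satisfies κ^m(x, A) ≥ c · Leb(A ∩ B_r(z)) for every x ∈ G and every Borel set A. In particular, every compact set is a small set for κ. -/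
open MeasureTheory ProbabilityTheory
open scoped ENNReal

/-- The `n`-step kernel: `n`-fold composition of a Markov kernel with itself. -/
noncomputable def kernelIter {E : Type} [MeasurableSpace E] (κ : Kernel E E) :
    ℕ → Kernel E E
  | 0 => Kernel.id
  | n + 1 => κ ∘ₖ kernelIter κ n

open Metric Set

variable {E : Type*} [NormedAddCommGroup E] [NormedSpace ℝ E]

/-- Geodesic-style lemma: a point within prescribed distances of two points. -/
lemma exists_middle_point (z x : E) {s t : ℝ} (hs : 0 ≤ s) (ht : 0 ≤ t)
    (h : dist z x ≤ s + t) : ∃ w : E, dist w z ≤ s ∧ dist w x ≤ t := by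
  by_cases hD : dist z x ≤ s
  · exact ⟨x, by simpa [dist_comm] using hD, by simp [ht]⟩
  push_neg at hD
  have hD0 : 0 < dist z x := lt_of_le_of_lt hs hD
  have hn : ‖x - z‖ = dist z x := by rw [dist_eq_norm, norm_sub_rev]
  refine ⟨z + (s / dist z x) • (x - z), ?_, ?_⟩
  · rw [dist_eq_norm, add_sub_cancel_left, norm_smul, Real.norm_eq_abs,
      abs_of_nonneg (div_nonneg hs hD0.le), hn, div_mul_cancel₀ _ hD0.ne']
  · have heq : z + (s / dist z x) • (x - z) - x = -((1 - s / dist z x) • (x - z)) := by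
      module
    rw [dist_eq_norm, heq, norm_neg, norm_smul, Real.norm_eq_abs, hn]
    have h1 : s / dist z x ≤ 1 := (div_le_one hD0).2 hD.le
    rw [abs_of_nonneg (by linarith), sub_mul, one_mul, div_mul_cancel₀ _ hD0.ne']
    linarith

/-- Two closed balls whose centers are close enough contain a common small ball. -/
lemma closedBall_inter_closedBall (z x : E) {a b ρ : ℝ} (hρ : 0 ≤ ρ)
    (hρa : ρ ≤ a) (hρb : ρ ≤ b) (h : dist z x ≤ a + b - 2 * ρ) :
    ∃ w : E, closedBall w ρ ⊆ closedBall z a ∩ closedBall x b := by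
  obtain ⟨w, hwz, hwx⟩ := exists_middle_point z x (s := a - ρ) (t := b - ρ)
    (by linarith) (by linarith) (by linarith)
  refine ⟨w, fun u hu => ?_⟩
  simp only [mem_closedBall] at *
  constructor
  · calc dist u z ≤ dist u w + dist w z := dist_triangle _ _ _
      _ ≤ a := by linarith
  · calc dist u x ≤ dist u w + dist w x := dist_triangle _ _ _
      _ ≤ b := by linarith


lemma key_integral (d : ℕ) (A : Set (EuclideanSpace ℝ (Fin d))) (hA : MeasurableSet A)
    (x : EuclideanSpace ℝ (Fin d)) {R ε : ℝ} (hε : 0 < ε) (hR : ε / 2 ≤ R) :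
    volume (closedBall (0 : EuclideanSpace ℝ (Fin d)) (ε / 4)) *
      volume (A ∩ closedBall x (R + ε / 2))
      ≤ ∫⁻ y in closedBall x ε, volume (A ∩ closedBall y R) := by
  set v := volume (closedBall (0 : EuclideanSpace ℝ (Fin d)) (ε / 4)) with hv
  set f : EuclideanSpace ℝ (Fin d) → EuclideanSpace ℝ (Fin d) → ℝ≥0∞ :=
    fun y z => A.indicator 1 z * (closedBall z R).indicator 1 y with hf
  have hfval : ∀ y z, f y z = (A ∩ closedBall y R).indicator 1 z := by
    intro y z
    rw [Set.inter_indicator_one]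
    simp only [hf, Pi.mul_apply]
    congr 1
    simp [Set.indicator, mem_closedBall, dist_comm]
  have hmeas : Measurable (Function.uncurry f) := by
    apply Measurable.mul
    · exact (measurable_const.indicator hA).comp measurable_snd
    · have h2 : (fun p : EuclideanSpace ℝ (Fin d) × EuclideanSpace ℝ (Fin d) =>
            (closedBall p.2 R).indicator (1 : EuclideanSpace ℝ (Fin d) → ℝ≥0∞) p.1)
          = ({p : EuclideanSpace ℝ (Fin d) × EuclideanSpace ℝ (Fin d) |
              dist p.1 p.2 ≤ R}).indicator 1 := by
        funext p; simp [Set.indicator, mem_closedBall]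
      exact h2 ▸ measurable_const.indicator (measurableSet_le measurable_dist measurable_const)
  have h1 : ∀ y, volume (A ∩ closedBall y R) = ∫⁻ z, f y z := by
    intro y
    rw [← lintegral_indicator_one (μ := volume) (hA.inter measurableSet_closedBall)]
    exact lintegral_congr fun z => (hfval y z).symm
  have hswap : ∫⁻ y in closedBall x ε, volume (A ∩ closedBall y R)
      = ∫⁻ z, ∫⁻ y in closedBall x ε, f y z := by
    rw [← lintegral_lintegral_swap hmeas.aemeasurable]
    exact lintegral_congr fun y => h1 y
  have hinner : ∀ z, ∫⁻ y in closedBall x ε, f y z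
      = A.indicator 1 z * volume (closedBall z R ∩ closedBall x ε) := by
    intro z
    simp only [hf, Pi.one_def]
    rw [lintegral_const_mul (A.indicator (fun _ => (1 : ℝ≥0∞)) z) ((measurable_const (a := (1 : ℝ≥0∞))).indicator (measurableSet_closedBall (x := z) (ε := R)))]
    congr 1
    rw [show (fun _ : EuclideanSpace ℝ (Fin d) => (1:ℝ≥0∞)) = 1 from rfl,
      lintegral_indicator_one (μ := volume.restrict (closedBall x ε))
        (measurableSet_closedBall (x := z) (ε := R)),
      Measure.restrict_apply measurableSet_closedBall]
  have hpt : ∀ z, (A ∩ closedBall x (R + ε / 2)).indicator (fun _ => v) z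
      ≤ A.indicator 1 z * volume (closedBall z R ∩ closedBall x ε) := by
    intro z
    by_cases hz : z ∈ A ∩ closedBall x (R + ε / 2)
    · rw [Set.indicator_of_mem hz, Set.indicator_of_mem hz.1, Pi.one_apply, one_mul]
      obtain ⟨w, hw⟩ := closedBall_inter_closedBall z x (a := R) (b := ε) (ρ := ε / 4)
        (by linarith) (by linarith) (by linarith)
        (by have := hz.2; rw [mem_closedBall] at this; linarith)
      calc v = volume (closedBall w (ε / 4)) :=
            (Measure.addHaar_closedBall_center volume w _).symm
        _ ≤ _ := measure_mono hw
    · rw [Set.indicator_of_notMem hz]; exact zero_le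
  calc v * volume (A ∩ closedBall x (R + ε / 2))
      = ∫⁻ z, (A ∩ closedBall x (R + ε / 2)).indicator (fun _ => v) z := by
        rw [lintegral_indicator (hA.inter measurableSet_closedBall), setLIntegral_const,
          mul_comm]
    _ ≤ ∫⁻ z, ∫⁻ y in closedBall x ε, f y z := lintegral_mono fun z => (hinner z) ▸ hpt z
    _ = _ := hswap.symm

lemma kernelIter_markov {E : Type} [MeasurableSpace E] (κ : Kernel E E) [IsMarkovKernel κ] :
    ∀ n, IsMarkovKernel (kernelIter κ n)
  | 0 => by rw [kernelIter]; infer_instance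
  | n + 1 => by
      rw [kernelIter]
      have := kernelIter_markov κ n
      infer_instance

lemma kernelIter_succ_eq {E : Type} [MeasurableSpace E] (κ : Kernel E E) [IsMarkovKernel κ] :
    ∀ n, kernelIter κ (n + 1) = kernelIter κ n ∘ₖ κ
  | 0 => by simp only [kernelIter, Kernel.comp_id, Kernel.id_comp]
  | n + 1 => by
      have hM := kernelIter_markov κ n
      rw [show kernelIter κ (n + 1 + 1) = κ ∘ₖ kernelIter κ (n + 1) from rfl,
        kernelIter_succ_eq κ n, ← Kernel.comp_assoc,
        show κ ∘ₖ kernelIter κ n = kernelIter κ (n + 1) from rfl,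
        kernelIter_succ_eq κ n]


/-- If a Markov kernel on `ℝ^d` satisfies the local minorization
`κ(x, A) ≥ c_* · Leb(A ∩ B_ε(x))`, then every compact set `G` is small: some `m`-step
kernel is uniformly minorized on `G` by a multiple of Lebesgue measure on a fixed ball. -/
theorem compact_sets_are_small (d : ℕ)
    (κ : Kernel (EuclideanSpace ℝ (Fin d)) (EuclideanSpace ℝ (Fin d)))
    (hκ : IsMarkovKernel κ)
    (ε cstar : ℝ) (hε : 0 < ε) (hc : 0 < cstar)
    (hminor : ∀ x, ∀ A : Set (EuclideanSpace ℝ (Fin d)), MeasurableSet A →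
      ENNReal.ofReal cstar * volume (A ∩ Metric.closedBall x ε) ≤ κ x A) :
    ∀ G : Set (EuclideanSpace ℝ (Fin d)), IsCompact G →
      ∃ m : ℕ, 1 ≤ m ∧ ∃ c > (0 : ℝ), ∃ z : EuclideanSpace ℝ (Fin d), ∃ r > (0 : ℝ),
        ∀ x ∈ G, ∀ A : Set (EuclideanSpace ℝ (Fin d)), MeasurableSet A →
          ENNReal.ofReal c * volume (A ∩ Metric.closedBall z r) ≤ (kernelIter κ m) x A := by
  intro G hG
  -- the basic chained minorization
  have main : ∀ n : ℕ, ∃ C : ℝ≥0∞, 0 < C ∧ C ≠ ⊤ ∧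
      ∀ x (A : Set (EuclideanSpace ℝ (Fin d))), MeasurableSet A →
        C * volume (A ∩ closedBall x (((n : ℝ) + 1) * (ε / 2))) ≤ kernelIter κ (n + 1) x A := by
    intro n
    induction n with
    | zero =>
      refine ⟨ENNReal.ofReal cstar, by simpa using hc, ENNReal.ofReal_ne_top, fun x A hA => ?_⟩
      have h1 : kernelIter κ 1 = κ := by
        rw [kernelIter_succ_eq κ 0, kernelIter, Kernel.id_comp]
      rw [h1]
      refine le_trans ?_ (hminor x A hA)
      refine mul_le_mul_right (measure_mono (Set.inter_subset_inter_right _ ?_)) _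
      exact closedBall_subset_closedBall (by simp; linarith)
    | succ n ih =>
      obtain ⟨C, hC0, hCtop, hC⟩ := ih
      set v := volume (closedBall (0 : EuclideanSpace ℝ (Fin d)) (ε / 4)) with hv
      have hv0 : 0 < v := measure_closedBall_pos volume _ (by linarith)
      have hvtop : v ≠ ⊤ := measure_closedBall_lt_top.ne
      refine ⟨ENNReal.ofReal cstar * C * v, ?_, ?_, fun x A hA => ?_⟩
      · exact ENNReal.mul_pos (ENNReal.mul_pos (by simpa using hc) hC0.ne').ne' hv0.ne'
      · exact ENNReal.mul_ne_top (ENNReal.mul_ne_top ENNReal.ofReal_ne_top hCtop) hvtop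
      haveI := kernelIter_markov κ (n + 1)
      set R : ℝ := ((n : ℝ) + 1) * (ε / 2) with hR
      have hεR : ε / 2 ≤ R := by
        rw [hR]
        nlinarith [Nat.cast_nonneg (α := ℝ) n]
      have hrad : ((↑(n + 1) : ℝ) + 1) * (ε / 2) = R + ε / 2 := by push_cast; ring
      have hle : (ENNReal.ofReal cstar) • (volume.restrict (closedBall x ε)) ≤ κ x := by
        refine Measure.le_iff.2 fun s hs => ?_
        rw [Measure.smul_apply, smul_eq_mul, Measure.restrict_apply hs]
        exact hminor x s hs
      calc ENNReal.ofReal cstar * C * v *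
            volume (A ∩ closedBall x (((↑(n + 1) : ℝ) + 1) * (ε / 2)))
          = ENNReal.ofReal cstar * C * (v * volume (A ∩ closedBall x (R + ε / 2))) := by
            rw [hrad]; ring
        _ ≤ ENNReal.ofReal cstar * C *
              ∫⁻ y in closedBall x ε, volume (A ∩ closedBall y R) :=
            mul_le_mul_right (key_integral d A hA x hε hεR) _
        _ = ENNReal.ofReal cstar *
              ∫⁻ y in closedBall x ε, C * volume (A ∩ closedBall y R) := by
            rw [mul_assoc, lintegral_const_mul' _ _ hCtop]
        _ ≤ ENNReal.ofReal cstar *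
              ∫⁻ y in closedBall x ε, kernelIter κ (n + 1) y A :=
            mul_le_mul_right (lintegral_mono fun y => hC y A hA) _
        _ = ∫⁻ y, kernelIter κ (n + 1) y A
              ∂((ENNReal.ofReal cstar) • (volume.restrict (closedBall x ε))) :=
            by rw [lintegral_smul_measure, smul_eq_mul]
        _ ≤ ∫⁻ y, kernelIter κ (n + 1) y A ∂(κ x) := lintegral_mono' hle le_rfl
        _ = kernelIter κ (n + 1 + 1) x A := by
            rw [kernelIter_succ_eq κ (n + 1), Kernel.comp_apply' _ _ _ hA]
  -- choose the number of steps from the size of G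
  obtain ⟨R₀, hR₀⟩ := hG.isBounded.subset_closedBall 0
  obtain ⟨n, hn⟩ := exists_nat_ge ((max R₀ 0 + 1) * 2 / ε)
  obtain ⟨C, hC0, hCtop, hC⟩ := main n
  refine ⟨n + 1, le_add_self, C.toReal, ENNReal.toReal_pos hC0.ne' hCtop, 0, 1,
    one_pos, fun x hx A hA => ?_⟩
  rw [ENNReal.ofReal_toReal hCtop]
  refine le_trans (mul_le_mul_right (measure_mono (Set.inter_subset_inter_right _ ?_)) _)
    (hC x A hA)
  intro z hz
  rw [mem_closedBall] at *
  have hx' : dist x 0 ≤ max R₀ 0 := le_trans (by simpa [mem_closedBall] using hR₀ hx)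
    (le_max_left _ _)
  have h1 : max R₀ 0 + 1 ≤ ((n : ℝ) + 1) * (ε / 2) := by
    rw [div_le_iff₀ (by linarith)] at hn
    nlinarith
  calc dist z x ≤ dist z 0 + dist 0 x := dist_triangle _ _ _
    _ ≤ 1 + max R₀ 0 := by rw [dist_comm (0 : EuclideanSpace ℝ (Fin d)) x]; linarith
    _ ≤ ((n : ℝ) + 1) * (ε / 2) := by linarith
end

section
/- Consider a generalized switch under MaxWeight as follows. Fix N ≥ 1, a weight vector γ ∈ ℝ^N with γ_i > 0 for all i, service decisions k = 1,…,K where decision k yields service vector v^{k,j} ∈ ℝ^N with 0 ≤ v^{k,j} ≤ S^max componentwise, with probability p^{k,j} (j = 1,…,O_k, Σ_j p^{k,j} = 1), and mean service vectors μ^k = Σ_j p^{k,j} v^{k,j}, assumed nonzero and pairwise distinct. Let f be a probability density on ℝ^N vanishing outside [0, A^max] with δ_* ≤ f ≤ δ^* a.e. there, where 0 ≤ S^max_i < A^max_i for all i, and let λ = ∫ x f(x) dx. Fix a measurable selection k: ℝ^N_+ → {1,…,K} with k(x) ∈ argmax_l (γx)·μ^l for every x, and define the queue kernel P on ℝ^N_+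 by: P(x, ·) is the law of (x − S)^+ + A, where S equals v^{k(x),j} with probability p^{k(x),j} and A is independent of S with density f. Let V = {x ∈ ℝ^N_+ : x ≤ Σ_k ψ_k μ^k for some ψ_k ≥ 0, Σ_k ψ_k = 1}. If λ lies in the interior of V, then there exist constants κ̃ > 0 and δ̃ > 0 such that for every x ∈ ℝ^N_+ with ‖√γ x‖ ≥ κ̃: ∫ ‖√γ y‖ P(x, dy) ≤ ‖√γ x‖ − δ̃, where √γ x denotes the vector (√γ_1 x_1, …, √γ_N x_N) and ‖·‖ the Euclidean norm. -/
open MeasureTheory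
open scoped ENNReal

/-- Auxiliary: first-order bound on the square root. -/
lemma aux_sqrt_le {A B : ℝ} (hA : 0 < A) (hB : 0 ≤ B) :
    Real.sqrt B ≤ Real.sqrt A + (B - A) / (2 * Real.sqrt A) := by
  have hsA : 0 < Real.sqrt A := Real.sqrt_pos.mpr hA
  rw [← sub_le_iff_le_add', le_div_iff₀ (by positivity)]
  nlinarith [Real.sq_sqrt hA.le, Real.sq_sqrt hB, Real.sqrt_nonneg B,
    sq_nonneg (Real.sqrt A - Real.sqrt B)]

/-- Auxiliary: quadratic expansion bound for one coordinate of the queue update. -/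
lemma aux_expand {xx vv aa SS AA : ℝ} (hx : 0 ≤ xx) (hv0 : 0 ≤ vv) (hvS : vv ≤ SS)
    (ha0 : 0 ≤ aa) (haA : aa ≤ AA) :
    (max (xx - vv) 0 + aa) ^ 2 ≤ xx ^ 2 + 2 * (xx * (aa - vv)) + (SS ^ 2 + AA ^ 2) := by
  have hu0 : 0 ≤ max (xx - vv) 0 := le_max_right _ _
  have hux : max (xx - vv) 0 ≤ xx := max_le (by linarith) hx
  have husq : (max (xx - vv) 0) ^ 2 ≤ (xx - vv) ^ 2 := by
    rcases le_or_gt (xx - vv) 0 with hc | hc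
    · rw [max_eq_right hc]
      simpa using sq_nonneg (xx - vv)
    · rw [max_eq_left hc.le]
  nlinarith [mul_le_mul_of_nonneg_right hux ha0,
    mul_self_le_mul_self hv0 hvS, mul_self_le_mul_self ha0 haA]

set_option maxHeartbeats 1000000 in
/-- Drift estimate for the MaxWeight queue chain of a generalized switch:
if the arrival-rate vector `λ` lies in the interior of the rate region `V`, the Lyapunov
function `L(x) = ‖√γ x‖` has one-step drift at most `−δ̃` whenever `L(x) ≥ κ̃`. -/
theorem maxweight_lyapunov_drift (N K : ℕ)
    (γ : Fin N → ℝ) (hγ : ∀ i, 0 < γ i)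
    (Smax Amax : Fin N → ℝ) (hSA : ∀ i, 0 ≤ Smax i ∧ Smax i < Amax i)
    (O : Fin K → ℕ)
    (v : (k : Fin K) → Fin (O k) → Fin N → ℝ)
    (hv : ∀ k j i, 0 ≤ v k j i ∧ v k j i ≤ Smax i)
    (p : (k : Fin K) → Fin (O k) → ℝ)
    (hp : ∀ k j, 0 ≤ p k j) (hp1 : ∀ k, ∑ j, p k j = 1)
    (μvec : Fin K → Fin N → ℝ) (hμdef : ∀ k i, μvec k i = ∑ j, p k j * v k j i)
    (hμ0 : ∀ k, μvec k ≠ 0) (hμdist : Function.Injective μvec)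
    (δlow δhigh : ℝ) (hδ0 : 0 < δlow) (hδ : δlow ≤ δhigh)
    (f : (Fin N → ℝ) → ℝ≥0∞) (hfmeas : Measurable f)
    (hsupp : ∀ x : Fin N → ℝ, ¬(∀ i, 0 ≤ x i ∧ x i ≤ Amax i) → f x = 0)
    (hfbound : ∀ᵐ x ∂(volume : Measure (Fin N → ℝ)),
      (∀ i, 0 ≤ x i ∧ x i ≤ Amax i) →
        ENNReal.ofReal δlow ≤ f x ∧ f x ≤ ENNReal.ofReal δhigh)
    (hprob : ∫⁻ x, f x ∂(volume : Measure (Fin N → ℝ)) = 1)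
    (lam : Fin N → ℝ) (hlam : ∀ i, lam i = ∫ x, x i ∂(volume.withDensity f))
    (ksel : (Fin N → ℝ) → Fin K) (hkselmeas : Measurable ksel)
    (hksel : ∀ x : Fin N → ℝ, (∀ i, 0 ≤ x i) →
      ∀ l, ∑ i, γ i * x i * μvec l i ≤ ∑ i, γ i * x i * μvec (ksel x) i)
    (Pker : (Fin N → ℝ) → Measure (Fin N → ℝ))
    (hPker : ∀ x, Pker x = ∑ j : Fin (O (ksel x)),
      ENNReal.ofReal (p (ksel x) j) •
        Measure.map (fun a : Fin N → ℝ => fun i => max (x i - v (ksel x) j i) 0 + a i)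
          (volume.withDensity f))
    (hV : lam ∈ interior {x : Fin N → ℝ | (∀ i, 0 ≤ x i) ∧
      ∃ ψ : Fin K → ℝ, (∀ k, 0 ≤ ψ k) ∧ ∑ k, ψ k = 1 ∧
        ∀ i, x i ≤ ∑ k, ψ k * μvec k i}) :
    ∃ κt > (0 : ℝ), ∃ δt > (0 : ℝ), ∀ x : Fin N → ℝ, (∀ i, 0 ≤ x i) →
      κt ≤ Real.sqrt (∑ i, γ i * x i ^ 2) →
      ∫ y, Real.sqrt (∑ i, γ i * y i ^ 2) ∂(Pker x) ≤
        Real.sqrt (∑ i, γ i * x i ^ 2) - δt := by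
  classical
  set ν : Measure (Fin N → ℝ) := volume.withDensity f with hνdef
  -- trivial case N = 0
  rcases Nat.eq_zero_or_pos N with hN | hN
  · refine ⟨1, one_pos, 1, one_pos, fun x hx hκ => ?_⟩
    exfalso
    subst hN
    simp [Finset.univ_eq_empty] at hκ
    linarith
  -- minimal weight
  obtain ⟨i₁, -, hm⟩ := Finset.exists_min_image Finset.univ γ ⟨⟨0, hN⟩, Finset.mem_univ _⟩
  set m : ℝ := γ i₁ with hmdef
  have hm0 : 0 < m := hγ i₁
  have hmle : ∀ i, m ≤ γ i := fun i => hm i (Finset.mem_univ i)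
  clear_value m
  -- ball inside V
  rw [mem_interior_iff_mem_nhds, Metric.mem_nhds_iff] at hV
  obtain ⟨r, hr0, hball⟩ := hV
  set ε : ℝ := (r / 2) * Real.sqrt m with hεdef
  have hε0 : 0 < ε := mul_pos (by linarith) (Real.sqrt_pos.mpr hm0)
  set C : ℝ := ∑ i, γ i * ((Smax i) ^ 2 + (Amax i) ^ 2) with hCdef
  have hC0 : 0 ≤ C := by
    rw [hCdef]
    exact Finset.sum_nonneg fun i _ =>
      mul_nonneg (hγ i).le (add_nonneg (sq_nonneg _) (sq_nonneg _))
  refine ⟨C / ε + 1, by have := div_nonneg hC0 hε0.le; linarith,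
    ε / 2, by linarith, fun x hx hκ => ?_⟩
  set L : ℝ := Real.sqrt (∑ i, γ i * x i ^ 2) with hLdef
  have hLpos : 0 < L :=
    lt_of_lt_of_le (by have := div_nonneg hC0 hε0.le; linarith) hκ
  have hLsq : L ^ 2 = ∑ i, γ i * x i ^ 2 := by
    rw [hLdef]
    exact Real.sq_sqrt (Finset.sum_nonneg fun i _ => mul_nonneg (hγ i).le (sq_nonneg _))
  clear_value L
  -- ===== Drift of the linear part via MaxWeight + interior =====
  have hdrift : ∑ i, γ i * x i * lam i - ∑ i, γ i * x i * μvec (ksel x) i ≤ -(ε * L) := by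
    set s : ℝ := Real.sqrt (∑ i, (γ i * x i) ^ 2) with hsdef
    have hssq : s ^ 2 = ∑ i, (γ i * x i) ^ 2 := by
      rw [hsdef]
      exact Real.sq_sqrt (Finset.sum_nonneg fun i _ => sq_nonneg _)
    have hsge : Real.sqrt m * L ≤ s := by
      rw [hsdef, hLdef, ← Real.sqrt_mul hm0.le]
      apply Real.sqrt_le_sqrt
      rw [Finset.mul_sum]
      refine Finset.sum_le_sum fun i _ => ?_
      have h1 : m * γ i ≤ γ i * γ i :=
        mul_le_mul_of_nonneg_right (hmle i) (hγ i).le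
      calc m * (γ i * x i ^ 2) = (m * γ i) * x i ^ 2 := by ring
        _ ≤ (γ i * γ i) * x i ^ 2 := mul_le_mul_of_nonneg_right h1 (sq_nonneg _)
        _ = (γ i * x i) ^ 2 := by ring
    clear_value s
    have hspos : 0 < s :=
      lt_of_lt_of_le (mul_pos (Real.sqrt_pos.mpr hm0) hLpos) hsge
    set y : Fin N → ℝ := fun i => lam i + (r / 2) * (γ i * x i) / s with hydef
    have hyball : y ∈ Metric.ball lam r := by
      rw [Metric.mem_ball, dist_pi_lt_iff hr0]
      intro i
      have hle : γ i * x i ≤ s := by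
        have h1 : (γ i * x i) ^ 2 ≤ s ^ 2 := by
          rw [hssq]
          exact Finset.single_le_sum (fun i _ => sq_nonneg (γ i * x i)) (Finset.mem_univ i)
        nlinarith
      have hnn : 0 ≤ γ i * x i := mul_nonneg (hγ i).le (hx i)
      rw [Real.dist_eq]
      have : y i - lam i = (r / 2) * (γ i * x i) / s := by rw [hydef]; ring
      rw [this, abs_of_nonneg (div_nonneg (mul_nonneg (by linarith) hnn) hspos.le)]
      have hnum : (r / 2) * (γ i * x i) ≤ (r / 2) * s :=
        mul_le_mul_of_nonneg_left hle (by linarith)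
      calc (r / 2) * (γ i * x i) / s ≤ (r / 2) * s / s := by gcongr
        _ = r / 2 := by rw [mul_div_assoc, div_self (ne_of_gt hspos), mul_one]
        _ < r := by linarith
    obtain ⟨hy0, ψ, hψ0, hψ1, hψle⟩ := hball hyball
    have h1 : ∑ i, γ i * x i * y i ≤ ∑ i, γ i * x i * μvec (ksel x) i := by
      calc ∑ i, γ i * x i * y i
          ≤ ∑ i, γ i * x i * (∑ k, ψ k * μvec k i) :=
            Finset.sum_le_sum fun i _ =>
              mul_le_mul_of_nonneg_left (hψle i) (mul_nonneg (hγ i).le (hx i))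
        _ = ∑ k, ψ k * ∑ i, γ i * x i * μvec k i := by
            simp_rw [Finset.mul_sum]
            rw [Finset.sum_comm]
            exact Finset.sum_congr rfl fun k _ => Finset.sum_congr rfl fun i _ => by ring
        _ ≤ ∑ k, ψ k * ∑ i, γ i * x i * μvec (ksel x) i :=
            Finset.sum_le_sum fun k _ =>
              mul_le_mul_of_nonneg_left (hksel x hx k) (hψ0 k)
        _ = ∑ i, γ i * x i * μvec (ksel x) i := by rw [← Finset.sum_mul, hψ1, one_mul]
    have h2 : ∑ i, γ i * x i * y i
        = ∑ i, γ i * x i * lam i + (r / 2) * s := by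
      have hterm : ∀ i ∈ Finset.univ, γ i * x i * y i
          = γ i * x i * lam i + (r / 2) / s * (γ i * x i) ^ 2 := fun i _ => by
        rw [hydef]; ring
      rw [Finset.sum_congr rfl hterm, Finset.sum_add_distrib, ← Finset.mul_sum, ← hssq]
      have hs' : s ≠ 0 := ne_of_gt hspos
      field_simp
    have h3 : ε * L ≤ (r / 2) * s := by
      rw [hεdef]
      calc r / 2 * Real.sqrt m * L = (r / 2) * (Real.sqrt m * L) := by ring
        _ ≤ (r / 2) * s := mul_le_mul_of_nonneg_left hsge (by linarith)
    linarith
  -- ===== Measure-theoretic setup =====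
  have hνprob : IsProbabilityMeasure ν := by
    constructor
    rw [hνdef, withDensity_apply _ MeasurableSet.univ, setLIntegral_univ]
    exact hprob
  set B : Set (Fin N → ℝ) := {a | ∀ i, 0 ≤ a i ∧ a i ≤ Amax i} with hBdef
  have hBmeas : MeasurableSet B := by
    have hBeq : B = Set.pi Set.univ (fun i => Set.Icc 0 (Amax i)) := by
      rw [hBdef]
      ext a
      simp [Set.mem_pi, Set.mem_Icc, Pi.le_def, forall_and]
    rw [hBeq]
    exact MeasurableSet.univ_pi fun i => measurableSet_Icc
  have haeB : ∀ᵐ a ∂ν, ∀ i, 0 ≤ a i ∧ a i ≤ Amax i := by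
    have h0 : ν Bᶜ = 0 := by
      rw [hνdef, withDensity_apply _ hBmeas.compl]
      rw [setLIntegral_congr_fun hBmeas.compl
        (fun a ha => hsupp a (by rw [hBdef] at ha; exact ha))]
      simp
    have : ∀ᵐ a ∂ν, a ∈ B := ae_iff.mpr h0
    rw [hBdef] at this
    exact this
  clear_value B
  have hintc : ∀ i, Integrable (fun a => a i) ν := by
    intro i
    refine Integrable.mono' (integrable_const (Amax i))
      (measurable_pi_apply i).aestronglyMeasurable ?_
    filter_upwards [haeB] with a ha
    rw [Real.norm_eq_abs, abs_of_nonneg (ha i).1]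
    exact (ha i).2
  set Lfun : (Fin N → ℝ) → ℝ := fun y => Real.sqrt (∑ i, γ i * y i ^ 2) with hLfdef
  have hLmeas : Measurable Lfun := by
    rw [hLfdef]
    exact Real.continuous_sqrt.measurable.comp
      (Finset.measurable_sum _ fun i _ =>
        (by fun_prop))
  have hLf0 : ∀ y, 0 ≤ Lfun y := fun y => by
    rw [hLfdef]; exact Real.sqrt_nonneg _
  have hLfapp : ∀ z, Lfun z = Real.sqrt (∑ i, γ i * z i ^ 2) := fun z => by
    rw [hLfdef]
  clear_value Lfun
  set k0 : Fin K := ksel x with hk0def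
  -- the shift maps
  set T : Fin (O k0) → (Fin N → ℝ) → (Fin N → ℝ) :=
    fun j a i => max (x i - v k0 j i) 0 + a i with hTdef
  have hTeq : ∀ j, (fun a : Fin N → ℝ => fun i => max (x i - v k0 j i) 0 + a i) = T j :=
    fun j => rfl
  have hTapp : ∀ j a i, T j a i = max (x i - v k0 j i) 0 + a i := fun j a i => rfl
  clear_value T
  have hTmeas : ∀ j, Measurable (T j) := fun j => by
    rw [← hTeq j]
    exact measurable_pi_lambda _ fun i => (measurable_pi_apply i).const_add _
  -- pointwise bound constants and the affine majorant
  set h : Fin (O k0) → (Fin N → ℝ) → ℝ := fun j a =>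
    (L + (C - 2 * ∑ i, γ i * x i * v k0 j i) / (2 * L)) + ∑ i, (γ i * x i / L) * a i
    with hhdef
  have hhapp : ∀ j a, h j a =
      (L + (C - 2 * ∑ i, γ i * x i * v k0 j i) / (2 * L)) + ∑ i, (γ i * x i / L) * a i :=
    fun j a => rfl
  clear_value h
  have hinth : ∀ j, Integrable (h j) ν := by
    intro j
    have : (h j) = fun a =>
        (L + (C - 2 * ∑ i, γ i * x i * v k0 j i) / (2 * L)) + ∑ i, (γ i * x i / L) * a i :=
      funext fun a => hhapp j a
    rw [this]
    exact (integrable_const _).add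
      (integrable_finset_sum _ fun i _ => (hintc i).const_mul _)
  -- pointwise domination
  have hpt : ∀ j, ∀ᵐ a ∂ν, Lfun (T j a) ≤ h j a := by
    intro j
    filter_upwards [haeB] with a ha
    have hsum : ∑ i, γ i * (T j a i) ^ 2
        ≤ L ^ 2 + (2 * ∑ i, γ i * x i * (a i - v k0 j i) + C) := by
      rw [hLsq, hCdef]
      have hterm : ∀ i ∈ Finset.univ, γ i * (T j a i) ^ 2
          ≤ γ i * x i ^ 2 + 2 * (γ i * x i * (a i - v k0 j i))
            + γ i * ((Smax i) ^ 2 + (Amax i) ^ 2) := by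
        intro i _
        have key : (max (x i - v k0 j i) 0 + a i) ^ 2
            ≤ x i ^ 2 + 2 * (x i * (a i - v k0 j i))
              + ((Smax i) ^ 2 + (Amax i) ^ 2) :=
          aux_expand (hx i) (hv k0 j i).1 (hv k0 j i).2 (ha i).1 (ha i).2
        rw [hTapp]
        calc γ i * (max (x i - v k0 j i) 0 + a i) ^ 2
            ≤ γ i * (x i ^ 2 + 2 * (x i * (a i - v k0 j i))
              + ((Smax i) ^ 2 + (Amax i) ^ 2)) :=
              mul_le_mul_of_nonneg_left key (hγ i).le
          _ = γ i * x i ^ 2 + 2 * (γ i * x i * (a i - v k0 j i))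
              + γ i * ((Smax i) ^ 2 + (Amax i) ^ 2) := by ring
      calc ∑ i, γ i * (T j a i) ^ 2
          ≤ ∑ i, (γ i * x i ^ 2 + 2 * (γ i * x i * (a i - v k0 j i))
              + γ i * ((Smax i) ^ 2 + (Amax i) ^ 2)) := Finset.sum_le_sum hterm
        _ = ∑ i, γ i * x i ^ 2 + (2 * ∑ i, γ i * x i * (a i - v k0 j i)
              + ∑ i, γ i * ((Smax i) ^ 2 + (Amax i) ^ 2)) := by
            rw [Finset.sum_add_distrib, Finset.sum_add_distrib, ← Finset.mul_sum]
            ring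
    -- now the sqrt step
    have hB0 : (0:ℝ) ≤ ∑ i, γ i * (T j a i) ^ 2 :=
      Finset.sum_nonneg fun i _ => mul_nonneg (hγ i).le (sq_nonneg _)
    have hstep : Lfun (T j a) ≤ L + (∑ i, γ i * (T j a i) ^ 2 - L ^ 2) / (2 * L) := by
      have haux := aux_sqrt_le (A := L ^ 2) (B := ∑ i, γ i * (T j a i) ^ 2)
        (pow_pos hLpos 2) hB0
      rw [Real.sqrt_sq hLpos.le] at haux
      rw [hLfapp]
      exact haux
    have hD : (∑ i, γ i * (T j a i) ^ 2 - L ^ 2) / (2 * L)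
        ≤ (2 * ∑ i, γ i * x i * (a i - v k0 j i) + C) / (2 * L) := by
      have h2L : (0:ℝ) < 2 * L := by linarith
      gcongr
      linarith
    have heq : L + (2 * ∑ i, γ i * x i * (a i - v k0 j i) + C) / (2 * L) = h j a := by
      rw [hhapp]
      have hsplit : ∑ i, γ i * x i * (a i - v k0 j i)
          = ∑ i, γ i * x i * a i - ∑ i, γ i * x i * v k0 j i := by
        rw [← Finset.sum_sub_distrib]
        exact Finset.sum_congr rfl fun i _ => by ring
      have hsum2 : ∑ i, γ i * x i / L * a i = (∑ i, γ i * x i * a i) / L := by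
        rw [Finset.sum_div]
        exact Finset.sum_congr rfl fun i _ => by ring
      rw [hsplit, hsum2]
      have hL' : L ≠ 0 := ne_of_gt hLpos
      field_simp
      ring
    calc Lfun (T j a) ≤ L + (∑ i, γ i * (T j a i) ^ 2 - L ^ 2) / (2 * L) := hstep
      _ ≤ L + (2 * ∑ i, γ i * x i * (a i - v k0 j i) + C) / (2 * L) := by linarith
      _ = h j a := heq
  -- integrability of Lfun ∘ T j
  have hintLT : ∀ j, Integrable (fun a => Lfun (T j a)) ν := by
    intro j
    refine Integrable.mono'
      (integrable_const (Real.sqrt (∑ i, γ i * (x i + Amax i) ^ 2)))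
      ((hLmeas.comp (hTmeas j)).aestronglyMeasurable) ?_
    filter_upwards [haeB] with a ha
    rw [Real.norm_eq_abs, abs_of_nonneg (hLf0 _), hLfapp]
    apply Real.sqrt_le_sqrt
    refine Finset.sum_le_sum fun i _ => ?_
    have h1 : (0:ℝ) ≤ T j a i := by
      rw [hTapp]
      exact add_nonneg (le_max_right _ _) (ha i).1
    have h2 : T j a i ≤ x i + Amax i := by
      have h3 : max (x i - v k0 j i) 0 ≤ x i :=
        max_le (by have := (hv k0 j i).1; linarith) (hx i)
      have := (ha i).2
      rw [hTapp]; linarith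
    exact mul_le_mul_of_nonneg_left (pow_le_pow_left₀ h1 h2 2) (hγ i).le
  -- value of ∫ h j
  have hIh : ∀ j, ∫ a, h j a ∂ν
      = (L + (C - 2 * ∑ i, γ i * x i * v k0 j i) / (2 * L))
        + ∑ i, (γ i * x i / L) * lam i := by
    intro j
    have hrw : (fun a => h j a) = fun a =>
        (L + (C - 2 * ∑ i, γ i * x i * v k0 j i) / (2 * L)) + ∑ i, (γ i * x i / L) * a i :=
      funext fun a => hhapp j a
    rw [hrw]
    rw [integral_add (integrable_const _)
      (integrable_finset_sum _ fun i _ => (hintc i).const_mul _)]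
    rw [integral_const, probReal_univ, one_smul]
    congr 1
    rw [integral_finset_sum _ fun i _ => (hintc i).const_mul _]
    exact Finset.sum_congr rfl fun i _ => by
      rw [integral_const_mul, ← hlam i]
  -- ===== putting it together =====
  have hsplit : ∫ y, Lfun y ∂(Pker x) = ∑ j, p k0 j * ∫ a, Lfun (T j a) ∂ν := by
    rw [hPker x]
    show ∫ y, Lfun y ∂(∑ j : Fin (O k0), ENNReal.ofReal (p k0 j) •
      Measure.map (fun a : Fin N → ℝ => fun i => max (x i - v k0 j i) 0 + a i) ν) = _
    simp_rw [hTeq]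
    rw [integral_finset_sum_measure (fun j _ =>
      (((integrable_map_measure hLmeas.aestronglyMeasurable
        (hTmeas j).aemeasurable).mpr (hintLT j))).smul_measure ENNReal.ofReal_ne_top)]
    refine Finset.sum_congr rfl fun j _ => ?_
    rw [integral_smul_measure,
      integral_map (hTmeas j).aemeasurable hLmeas.aestronglyMeasurable,
      ENNReal.toReal_ofReal (hp k0 j), smul_eq_mul]
  have hjle : ∀ j, ∫ a, Lfun (T j a) ∂ν ≤ ∫ a, h j a ∂ν := fun j =>
    integral_mono_of_nonneg (Filter.Eventually.of_forall fun a => hLf0 _)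
      (hinth j) (hpt j)
  have hfinal : ∫ y, Lfun y ∂(Pker x)
      ≤ L + C / (2 * L) + (∑ i, γ i * x i * lam i - ∑ i, γ i * x i * μvec k0 i) / L := by
    rw [hsplit]
    calc ∑ j, p k0 j * ∫ a, Lfun (T j a) ∂ν
        ≤ ∑ j, p k0 j * ∫ a, h j a ∂ν :=
          Finset.sum_le_sum fun j _ =>
            mul_le_mul_of_nonneg_left (hjle j) (hp k0 j)
      _ = L + C / (2 * L) + (∑ i, γ i * x i * lam i - ∑ i, γ i * x i * μvec k0 i) / L := by
          simp_rw [hIh]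
          have hswap : ∑ j, p k0 j * ∑ i, γ i * x i * v k0 j i
              = ∑ i, γ i * x i * μvec k0 i := by
            simp_rw [hμdef k0, Finset.mul_sum]
            rw [Finset.sum_comm]
            exact Finset.sum_congr rfl fun i _ => Finset.sum_congr rfl fun j _ => by ring
          have hlamsum : ∑ i, γ i * x i / L * lam i
              = (∑ i, γ i * x i * lam i) / L := by
            rw [Finset.sum_div]
            exact Finset.sum_congr rfl fun i _ => by ring
          have hexpand : ∀ j ∈ Finset.univ, p k0 j *
              ((L + (C - 2 * ∑ i, γ i * x i * v k0 j i) / (2 * L))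
                + ∑ i, γ i * x i / L * lam i)
              = p k0 j * (L + C / (2 * L) + (∑ i, γ i * x i * lam i) / L)
                - p k0 j * (∑ i, γ i * x i * v k0 j i) / L := by
            intro j _
            rw [hlamsum]
            have hL' : L ≠ 0 := ne_of_gt hLpos
            field_simp
            ring
          rw [Finset.sum_congr rfl hexpand, Finset.sum_sub_distrib,
            ← Finset.sum_mul, hp1 k0, one_mul]
          rw [show (∑ j, p k0 j * (∑ i, γ i * x i * v k0 j i) / L)
              = (∑ i, γ i * x i * μvec k0 i) / L by
            rw [← Finset.sum_div, hswap]]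
          have hL' : L ≠ 0 := ne_of_gt hLpos
          field_simp
          try ring
  -- conclude
  have hCle : C / (2 * L) ≤ ε / 2 := by
    rw [div_le_div_iff₀ (by linarith) (by norm_num)]
    have hκ' : C / ε + 1 ≤ L := hκ
    have h1 : C + ε ≤ ε * L := by
      have h2 := mul_le_mul_of_nonneg_left hκ' hε0.le
      have h3 : ε * (C / ε + 1) = C + ε := by field_simp
      linarith
    nlinarith
  have hdrift' : (∑ i, γ i * x i * lam i - ∑ i, γ i * x i * μvec k0 i) / L ≤ -ε := by
    rw [div_le_iff₀ hLpos]
    calc ∑ i, γ i * x i * lam i - ∑ i, γ i * x i * μvec k0 i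
        ≤ -(ε * L) := by rw [hk0def]; exact hdrift
      _ = -ε * L := by ring
  calc ∫ y, Lfun y ∂(Pker x)
      ≤ L + C / (2 * L) + (∑ i, γ i * x i * lam i - ∑ i, γ i * x i * μvec k0 i) / L :=
        hfinal
    _ ≤ L + ε / 2 + (-ε) := by linarith
    _ = L - ε / 2 := by ring
end
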